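/- arXiv:1707.02757 — 9 statements merged into one kernel-verified Lean document; each statement's English description precedes it below -/
import Mathlib

section
/- Let γ ≥ 1 be a real number, let r ≥ 2 be an integer with r ≥ γ, and set k = ⌈log r⌉ (natural logarithm). Define ζ_i = (k − i)/k for i ∈ {1, …, k−1} and ζ_k = γ/r, and let σ : [k] → [k] be the cyclic permutation σ(i) = i + 1 for i < k and σ(k) = 1. Then for every tuple (i_1, …, i_r) ∈ [k]^r there exists l ∈ [k] such that ∏_{j=1}^r ζ_{σ^l(i_j)} ≥ e^{-2r}, where σ^l denotes σ composed with itself l times. -/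
/-!
Every orbit of the cyclic shift `σ` on `[k]` meets each point of `[k]` exactly once, so the
product over the `k` shifts `l ∈ [k]` of the cell weights `∏ⱼ ζ (σˡ iⱼ)` equals `Q ^ r` with
`Q = ∏_{i ∈ [k]} ζ i`; the largest of the `k` factors is therefore at least `Q ^ (r / k)`.
Finally `∏_{i < k} ζ i = k! / k ^ k ≥ e^{-k}` and `ζ k = γ / r ≥ 1 / r ≥ e^{-k}` because
`k ≥ log r`, so `Q ≥ e^{-2k}`.
-/

open Finset Nat Real

theorem Finset.prod_range_add_mod {M : Type*} [CommMonoid M] (f : ℕ → M) {k : ℕ} (hk : 0 < k)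
    (b : ℕ) : ∏ l ∈ range k, f ((b + l) % k) = ∏ l ∈ range k, f l := by
  obtain ⟨n, rfl⟩ : ∃ n, k = n + 1 := ⟨k - 1, by omega⟩
  simp only [← Fin.prod_univ_eq_prod_range]
  refine Fintype.prod_equiv (Equiv.addLeft (Fin.ofNat (n + 1) b)) _ _ fun l => ?_
  simp [Fin.val_add]

theorem Finset.prod_Icc_one_eq_prod_range {M : Type*} [CommMonoid M] (f : ℕ → M) (k : ℕ) :
    ∏ i ∈ Icc 1 k, f i = ∏ i ∈ range k, f (i + 1) := by
  rw [← Ico_add_one_right_eq_Icc, prod_Ico_eq_prod_range]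
  simp [add_comm]

def IsCyclicShift (k : ℕ) (σ : ℕ → ℕ) : Prop :=
  (∀ i : ℕ, 1 ≤ i → i ≤ k - 1 → σ i = i + 1) ∧ σ k = 1

namespace IsCyclicShift

variable {k : ℕ} {σ : ℕ → ℕ}

theorem iterate_apply (hσ : IsCyclicShift k σ) (l : ℕ) {a : ℕ} (ha : a < k) :
    σ^[l] (a + 1) = (a + l) % k + 1 := by
  induction l with
  | zero => simp [Nat.mod_eq_of_lt ha]
  | succ l ih =>
    rw [Function.iterate_succ_apply', ih, ← add_assoc, ← Nat.mod_add_mod (a + l) k 1]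
    have hb : (a + l) % k < k := Nat.mod_lt _ (by omega)
    generalize (a + l) % k = b at hb ⊢
    obtain hb | hb := (Nat.add_one_le_of_lt hb).eq_or_lt
    · rw [hb, hσ.2, Nat.mod_self]
    · rw [hσ.1 (b + 1) (by omega) (by omega), Nat.mod_eq_of_lt hb]

theorem iterate_mem_Icc (hσ : IsCyclicShift k σ) (l : ℕ) {x : ℕ} (hx : x ∈ Icc 1 k) :
    σ^[l] x ∈ Icc 1 k := by
  obtain ⟨a, rfl⟩ : ∃ a, x = a + 1 := ⟨x - 1, by grind⟩
  have ha : a < k := by grind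
  rw [hσ.iterate_apply l ha, mem_Icc]
  have := Nat.mod_lt (a + l) (by omega : 0 < k)
  omega

theorem prod_Icc_iterate {M : Type*} [CommMonoid M] (hσ : IsCyclicShift k σ) (f : ℕ → M)
    {x : ℕ} (hx : x ∈ Icc 1 k) :
    ∏ l ∈ Icc 1 k, f (σ^[l] x) = ∏ i ∈ Icc 1 k, f i := by
  obtain ⟨a, rfl⟩ : ∃ a, x = a + 1 := ⟨x - 1, by grind⟩
  have ha : a < k := by grind
  simp only [prod_Icc_one_eq_prod_range, hσ.iterate_apply _ ha]
  rw [← prod_range_add_mod (fun i => f (i + 1)) (by omega) (a + 1)]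
  simp only [add_assoc, add_comm 1]

end IsCyclicShift

theorem Finset.exists_prod_le_pow_card {ι R : Type*} [CommSemiring R] [LinearOrder R]
    [IsOrderedRing R] {s : Finset ι} (hs : s.Nonempty) {f : ι → R} (hf : ∀ i ∈ s, 0 ≤ f i) :
    ∃ i ∈ s, ∏ j ∈ s, f j ≤ f i ^ #s := by
  obtain ⟨i, hi, hmax⟩ := s.exists_max_image f hs
  exact ⟨i, hi, (prod_le_prod hf hmax).trans_eq (prod_const _)⟩

theorem Nat.prod_range_cast_sub_eq_factorial {R : Type*} [CommRing R] (n : ℕ) :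
    ∏ i ∈ range n, ((n : R) - i) = n ! := by
  rw [← descFactorial_self, descFactorial_eq_prod_range, cast_prod]
  exact prod_congr rfl fun i hi => (cast_sub (mem_range.1 hi).le).symm

theorem prod_Icc_sub_div_eq_factorial_div_pow {K : Type*} [Field K] [CharZero K] (k : ℕ) :
    ∏ i ∈ Icc 1 (k - 1), ((k : K) - i) / k = k ! / k ^ k := by
  rcases k with _ | n
  · simp
  have h := prod_range_succ' (fun i : ℕ => (((n + 1 : ℕ) : K) - i) / (n + 1 : ℕ)) n
  rw [cast_zero, sub_zero, div_self (cast_ne_zero.2 n.succ_ne_zero), mul_one] at h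
  rw [Nat.add_sub_cancel, prod_Icc_one_eq_prod_range, ← h, prod_div_distrib, prod_const,
    card_range, prod_range_cast_sub_eq_factorial]

theorem Real.exp_neg_le_factorial_div_pow (n : ℕ) : exp (-n) ≤ n ! / n ^ n := by
  have hpos : (0 : ℝ) < n ^ n / n ! := by
    have : (0 : ℝ) < n ^ n := mod_cast Nat.pow_self_pos
    positivity
  simpa [exp_neg] using inv_anti₀ hpos (pow_div_factorial_le_exp _ (cast_nonneg n) n)

theorem Real.exp_neg_le_div_of_log_le {γ r x : ℝ} (hγ : 1 ≤ γ) (hr : 0 < r) (h : log r ≤ x) :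
    exp (-x) ≤ γ / r := calc
  exp (-x) ≤ r⁻¹ := by
    rw [exp_neg]
    exact inv_anti₀ hr ((log_le_iff_le_exp hr).1 h)
  _ ≤ γ / r := by
    rw [inv_eq_one_div]
    gcongr

theorem exp_neg_two_mul_le_prod_Icc_of_eq_sub_div {k : ℕ} (hk : 0 < k) {ζ : ℕ → ℝ}
    (hζ : ∀ i : ℕ, 1 ≤ i → i ≤ k - 1 → ζ i = ((k : ℝ) - i) / k) (hζk : exp (-k) ≤ ζ k) :
    exp (-2 * k) ≤ ∏ i ∈ Icc 1 k, ζ i := by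
  have hinit : exp (-k) ≤ ∏ i ∈ Icc 1 (k - 1), ζ i := by
    rw [prod_congr rfl fun i hi => hζ i (mem_Icc.1 hi).1 (mem_Icc.1 hi).2,
      prod_Icc_sub_div_eq_factorial_div_pow]
    exact exp_neg_le_factorial_div_pow k
  calc exp (-2 * k) = exp (-k) * exp (-k) := by rw [← exp_add]; ring_nf
    _ ≤ (∏ i ∈ Icc 1 (k - 1), ζ i) * ζ k :=
      mul_le_mul hinit hζk (exp_pos _).le ((exp_pos _).le.trans hinit)
    _ = ∏ i ∈ Icc 1 k, ζ i := by
      have h := prod_Icc_succ_top (a := 1) (b := k - 1) (by omega) ζ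
      rwa [Nat.sub_add_cancel hk, eq_comm] at h

theorem good_cell_in_orbit_general
    (γ : ℝ) (hγ : 1 ≤ γ) (r : ℕ) (hr : 2 ≤ r)
    (k : ℕ) (hk : k = ⌈Real.log r⌉₊)
    (ζ : ℕ → ℝ) (hζ : ∀ i : ℕ, 1 ≤ i → i ≤ k - 1 → ζ i = ((k : ℝ) - i) / k)
    (hζk : ζ k = γ / r)
    (σ : ℕ → ℕ) (hσ : ∀ i : ℕ, 1 ≤ i → i ≤ k - 1 → σ i = i + 1) (hσk : σ k = 1)
    (ι : Fin r → ℕ) (hι : ∀ j, ι j ∈ Finset.Icc 1 k) :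
    ∃ l ∈ Finset.Icc 1 k, Real.exp (-2 * r) ≤ ∏ j : Fin r, ζ (σ^[l] (ι j)) := by
  have hr1 : (1 : ℝ) < r := by exact_mod_cast hr
  have hk0 : 0 < k := hk ▸ Nat.ceil_pos.2 (log_pos hr1)
  have hζ0 : ∀ i ∈ Icc 1 k, 0 ≤ ζ i := fun i hi => by
    obtain hik | rfl := (mem_Icc.1 hi).2.lt_or_eq
    · rw [hζ i (mem_Icc.1 hi).1 (by omega)]
      exact div_nonneg (sub_nonneg.2 (mod_cast hik.le)) (cast_nonneg k)
    · rw [hζk]; positivity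
  have hσ' : IsCyclicShift k σ := ⟨hσ, hσk⟩
  set P : ℕ → ℝ := fun l => ∏ j : Fin r, ζ (σ^[l] (ι j))
  have hP0 : ∀ l, 0 ≤ P l := fun l =>
    prod_nonneg fun j _ => hζ0 _ (hσ'.iterate_mem_Icc l (hι j))
  have horbit : ∏ l ∈ Icc 1 k, P l = (∏ i ∈ Icc 1 k, ζ i) ^ r := by
    rw [prod_comm, prod_congr rfl fun j _ => hσ'.prod_Icc_iterate ζ (hι j), prod_const,
      Finset.card_fin]
  obtain ⟨l, hl, hPl⟩ := exists_prod_le_pow_card (nonempty_Icc.2 hk0) fun l _ => hP0 l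
  refine ⟨l, hl, (pow_le_pow_iff_left₀ (exp_pos _).le (hP0 l) hk0.ne').1 ?_⟩
  have hQ := exp_neg_two_mul_le_prod_Icc_of_eq_sub_div hk0 hζ
    (hζk ▸ exp_neg_le_div_of_log_le hγ (by positivity) (hk ▸ Nat.le_ceil _))
  calc exp (-2 * r) ^ k = exp (-2 * k) ^ r := by rw [← exp_nat_mul, ← exp_nat_mul]; ring_nf
    _ ≤ (∏ i ∈ Icc 1 k, ζ i) ^ r := by gcongr
    _ = ∏ l ∈ Icc 1 k, P l := horbit.symm
    _ ≤ P l ^ #(Icc 1 k) := hPl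
    _ = P l ^ k := by rw [Nat.card_Icc, Nat.add_sub_cancel]

/-- **Good cell in every orbit**: with `k = ⌈log r⌉`, `ζ_i = (k-i)/k` for `1 ≤ i ≤ k-1`,
`ζ_k = γ/r`, and `σ` the cyclic shift on `[k]`, for every tuple `(i_1,…,i_r) ∈ [k]^r` there is
some `l ∈ [k]` with `∏_{j=1}^r ζ_{σ^l(i_j)} ≥ e^{-2r}`. -/
theorem good_cell_in_orbit
    (γ : ℝ) (hγ : 1 ≤ γ) (r : ℕ) (hr : 2 ≤ r) (hγr : γ ≤ r)
    (k : ℕ) (hk : k = ⌈Real.log r⌉₊)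
    (ζ : ℕ → ℝ) (hζ : ∀ i : ℕ, 1 ≤ i → i ≤ k - 1 → ζ i = ((k : ℝ) - i) / k)
    (hζk : ζ k = γ / r)
    (σ : ℕ → ℕ) (hσ : ∀ i : ℕ, 1 ≤ i → i ≤ k - 1 → σ i = i + 1) (hσk : σ k = 1)
    (ι : Fin r → ℕ) (hι : ∀ j, ι j ∈ Finset.Icc 1 k) :
    ∃ l ∈ Finset.Icc 1 k, Real.exp (-2 * r) ≤ ∏ j : Fin r, ζ (σ^[l] (ι j)) :=
  good_cell_in_orbit_general γ hγ r hr k hk ζ hζ hζk σ hσ hσk ι hι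
end

section
/- Let d ≥ r ≥ 1 be integers, let p_1, …, p_r be positive integers, and let v^{(i,j)} ∈ ℝ^d for i ∈ [r], j ∈ [p_i] be arbitrary vectors. Then the volume function f_V : ∏_{i=1}^r Δ_{p_i} → ℝ defined by f_V(x) = det(W(x)ᵀ W(x))^{1/2}, where W(x) ∈ ℝ^{d×r} is the matrix whose i-th column is Σ_{j=1}^{p_i} x^i_j v^{(i,j)}, is 2-anti-concentrated: for every coordinate i ∈ [r], every fixed choice of y^j ∈ Δ_{p_j} for j ≠ i, and every c ∈ (0,1), the uniform measure μ_{p_i} of the set { z ∈ Δ_{p_i} : f_V(y^1, …, y^{i−1}, z, y^{i+1}, …, y^r) ≥ c · sup_{w ∈ Δ_{p_i}} f_V(y^1, …, w, …, y^r) } is at least 1 − 2 p_i c. -/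
open MeasureTheory Matrix

noncomputable section

/-- The standard simplex `Δ_d = {x ∈ ℝ^d : ∑ x_i = 1, x ≥ 0}` inside Euclidean space. -/
def stdSimplexE (d : ℕ) : Set (EuclideanSpace ℝ (Fin d)) :=
  {x | (∀ i, 0 ≤ x i) ∧ ∑ i, x i = 1}

/-- The uniform probability measure `μ_d` on the standard simplex: the `(d-1)`-dimensional
Hausdorff measure restricted to the simplex and normalized to total mass one. -/
def simplexUniform (d : ℕ) : Measure (EuclideanSpace ℝ (Fin d)) :=
  (μH[(d : ℝ) - 1] (stdSimplexE d))⁻¹ • (μH[(d : ℝ) - 1]).restrict (stdSimplexE d)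

/-- The volume function `f_V(x) = det(W(x)ᵀ W(x))^{1/2}`, where the `i`-th column of
`W(x) ∈ ℝ^{d×r}` is `∑_j x^i_j v^{(i,j)}`. -/
def volFn {d r : ℕ} (p : Fin r → ℕ) (v : ∀ i : Fin r, Fin (p i) → (Fin d → ℝ))
    (x : ∀ i : Fin r, EuclideanSpace ℝ (Fin (p i))) : ℝ :=
  Real.sqrt (Matrix.det
    ((Matrix.of fun (a : Fin d) (i : Fin r) => ∑ j, x i j * v i j a)ᵀ *
      Matrix.of fun (a : Fin d) (i : Fin r) => ∑ j, x i j * v i j a))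

/-!
Once the blocks `y^j`, `j ≠ i`, are fixed, the Gram determinant `det (Wᵀ W)` is a positive
semidefinite quadratic form in the `i`-th column of `W`, and that column depends linearly on
`z = x^i`; so `N z := f_V(…, z, …)` is a seminorm. Being convex, `N` attains its maximum `M` on the
simplex at a vertex `e`. The homotheties with centre `e` and ratios `1 - 2cj`, `0 ≤ j < 1/(2c)`,
map the bad set `{N < cM}` into the simplex, onto pairwise disjoint sets (on the `j`-th image `N`
stays within `cM` of `2cjM`), and scale the `(p_i - 1)`-dimensional Hausdorff measure by
`(1 - 2cj) ^ (p_i - 1)`. As `∑_j 2c (1 - 2cj) ^ (p_i - 1)` is a left Riemann sum for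
`∫₀¹ (1 - t) ^ (p_i - 1) dt = 1 / p_i`, the bad set has at most `2 p_i c` times the measure of the
simplex.
-/

open scoped ENNReal

namespace LinearMap.BilinForm

variable {E : Type*} [AddCommGroup E] [Module ℝ E]

theorem sqrt_apply_add_le (B : LinearMap.BilinForm ℝ E) (hB : LinearMap.IsSymm B)
    (hB₀ : ∀ x, 0 ≤ B x x) (x y : E) : √(B (x + y) (x + y)) ≤ √(B x x) + √(B y y) := by
  have hxy : B x y ≤ √(B x x) * √(B y y) := by
    rw [← Real.sqrt_mul (hB₀ x)]
    exact (le_abs_self _).trans (Real.abs_le_sqrt (B.apply_sq_le_of_symm hB₀ hB x y))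
  have hexp : B (x + y) (x + y) = B x x + 2 * B x y + B y y := by
    simp only [map_add, LinearMap.add_apply, ← hB.eq x y, RingHom.id_apply]
    ring
  rw [Real.sqrt_le_left (by positivity), hexp]
  nlinarith [Real.sq_sqrt (hB₀ x), Real.sq_sqrt (hB₀ y)]

def sqrtSeminorm (B : LinearMap.BilinForm ℝ E) (hB : LinearMap.IsSymm B)
    (hB₀ : ∀ x, 0 ≤ B x x) : Seminorm ℝ E :=
  Seminorm.of (fun x => √(B x x)) (sqrt_apply_add_le B hB hB₀) fun a x => by
    simp only [map_smul, LinearMap.smul_apply, smul_eq_mul, ← mul_assoc, Real.norm_eq_abs]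
    rw [Real.sqrt_mul' _ (hB₀ x), Real.sqrt_mul_self_eq_abs]

end LinearMap.BilinForm

namespace Matrix

variable {n ι : Type*} [Fintype n] [Fintype ι] [DecidableEq ι]

def gramDetForm (A : Matrix n ι ℝ) (i : ι) : LinearMap.BilinForm ℝ (n → ℝ) :=
  LinearMap.mk₂ ℝ (fun u u' => ((A.updateCol i u)ᵀ * A.updateCol i u').det)
    (fun u₁ u₂ u' => by
      simp only [← updateRow_transpose, updateRow_mul, add_vecMul, det_updateRow_add])
    (fun s u u' => by
      simp only [← updateRow_transpose, updateRow_mul, smul_vecMul, det_updateRow_smul,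
        smul_eq_mul])
    (fun u u₁ u₂ => by
      simp only [mul_updateCol, mulVec_add, det_updateCol_add])
    (fun s u u' => by
      simp only [mul_updateCol, mulVec_smul, det_updateCol_smul, smul_eq_mul])

theorem gramDetForm_apply (A : Matrix n ι ℝ) (i : ι) (u u' : n → ℝ) :
    A.gramDetForm i u u' = ((A.updateCol i u)ᵀ * A.updateCol i u').det := rfl

theorem isSymm_gramDetForm (A : Matrix n ι ℝ) (i : ι) : LinearMap.IsSymm (A.gramDetForm i) :=
  ⟨fun u u' => by
    rw [RingHom.id_apply, gramDetForm_apply, gramDetForm_apply, ← det_transpose,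
      transpose_mul, transpose_transpose]⟩

theorem det_transpose_mul_self_nonneg (A : Matrix n ι ℝ) : 0 ≤ (Aᵀ * A).det := by
  simpa [conjTranspose_eq_transpose_of_trivial] using
    (posSemidef_conjTranspose_mul_self A).det_nonneg

def gramSeminorm (A : Matrix n ι ℝ) (i : ι) : Seminorm ℝ (n → ℝ) :=
  LinearMap.BilinForm.sqrtSeminorm (A.gramDetForm i) (A.isSymm_gramDetForm i)
    fun u => det_transpose_mul_self_nonneg (A.updateCol i u)

theorem gramSeminorm_apply (A : Matrix n ι ℝ) (i : ι) (u : n → ℝ) :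
    A.gramSeminorm i u = √((A.updateCol i u)ᵀ * A.updateCol i u).det := rfl

end Matrix

open Finset in
theorem one_le_mul_sum_one_sub_mul_pow {δ : ℝ} (hδ : 0 < δ) (m : ℕ) :
    1 ≤ (m + 1) * δ * ∑ j ∈ range ⌈δ⁻¹⌉₊, (1 - δ * j) ^ m := by
  set a : ℕ → ℝ := fun j => max (1 - δ * j) 0
  have ha_of_lt : ∀ j < ⌈δ⁻¹⌉₊, a j = 1 - δ * j := fun j hj => by
    have : δ * j < 1 := by
      have := mul_lt_mul_of_pos_left (Nat.lt_ceil.mp hj) hδ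
      rwa [mul_inv_cancel₀ hδ.ne'] at this
    exact max_eq_left (by linarith)
  have ha_ceil : a ⌈δ⁻¹⌉₊ = 0 := by
    have : 1 ≤ δ * ⌈δ⁻¹⌉₊ := by
      have := Nat.le_ceil δ⁻¹
      rwa [inv_le_iff_one_le_mul₀' hδ] at this
    exact max_eq_right (by linarith)
  have hstep : ∀ j ∈ range ⌈δ⁻¹⌉₊,
      a j ^ (m + 1) - a (j + 1) ^ (m + 1) ≤ (m + 1) * δ * (1 - δ * j) ^ m := by
    intro j hj
    have ha₀ : 0 ≤ a (j + 1) := le_max_right _ _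
    have hle : a (j + 1) ≤ a j := max_le_max (by push_cast; nlinarith) le_rfl
    have hgap : a j - a (j + 1) ≤ δ := by
      have : 1 - δ * (j + 1) ≤ a (j + 1) := by
        simp only [a]; push_cast; exact le_max_left _ _
      rw [ha_of_lt j (mem_range.mp hj)]
      linarith
    calc a j ^ (m + 1) - a (j + 1) ^ (m + 1)
        ≤ |a j - a (j + 1)| * ↑(m + 1) * max |a j| |a (j + 1)| ^ (m + 1 - 1) :=
          (le_abs_self _).trans (abs_pow_sub_pow_le _ _ _)
      _ = (a j - a (j + 1)) * (m + 1) * a j ^ m := by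
          rw [abs_of_nonneg (sub_nonneg.mpr hle), abs_of_nonneg ha₀,
            abs_of_nonneg (ha₀.trans hle), max_eq_left hle, Nat.add_sub_cancel, Nat.cast_succ]
      _ ≤ δ * (m + 1) * a j ^ m := by gcongr
      _ = _ := by rw [ha_of_lt j (mem_range.mp hj)]; ring
  have htel := sum_le_sum hstep
  rw [sum_range_sub', ha_ceil, ← mul_sum] at htel
  simpa [a] using htel

namespace Seminorm

variable {E : Type*} [NormedAddCommGroup E] [NormedSpace ℝ E]

theorem abs_map_homothety_sub_le (N : Seminorm ℝ E) (e z : E) {t : ℝ} (ht₀ : 0 ≤ t)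
    (ht₁ : t ≤ 1) : |N (AffineMap.homothety e t z) - (1 - t) * N e| ≤ N z := by
  have hx : AffineMap.homothety e t z - (1 - t) • e = t • z := by
    rw [AffineMap.homothety_apply, vsub_eq_sub, vadd_eq_add, smul_sub, sub_smul, one_smul]
    abel
  calc |N (AffineMap.homothety e t z) - (1 - t) * N e|
      = |N (AffineMap.homothety e t z) - N ((1 - t) • e)| := by
        rw [map_smul_eq_mul, Real.norm_of_nonneg (by linarith)]
    _ ≤ N (AffineMap.homothety e t z - (1 - t) • e) := abs_sub_map_le_sub N _ _
    _ ≤ N z := by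
        rw [hx, map_smul_eq_mul, Real.norm_of_nonneg ht₀]
        exact mul_le_of_le_one_left (apply_nonneg N z) ht₁

variable [FiniteDimensional ℝ E] [MeasurableSpace E] [BorelSpace E]

theorem hausdorffMeasure_setOf_lt_le (N : Seminorm ℝ E) {Δ : Set E} (hΔ : Convex ℝ Δ)
    (hΔm : MeasurableSet Δ) {e : E} (he : e ∈ Δ) {c : ℝ} (hc : 0 < c) (m : ℕ) :
    μH[m] {z ∈ Δ | N z < c * N e} ≤ ENNReal.ofReal (2 * c * (m + 1)) * μH[m] Δ := by
  set B := {z ∈ Δ | N z < c * N e}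
  set K := ⌈(2 * c)⁻¹⌉₊
  set φ : ℕ → E →ᵃ[ℝ] E := fun j => AffineMap.homothety e (1 - 2 * c * j)
  have hratio : ∀ j < K, 0 < 1 - 2 * c * j := fun j hj => by
    have := mul_lt_mul_of_pos_left (Nat.lt_ceil.mp hj) (by positivity : 0 < 2 * c)
    rw [mul_inv_cancel₀ (by positivity)] at this
    linarith
  have hBm : MeasurableSet B :=
    hΔm.inter (measurableSet_lt N.convexOn.locallyLipschitz.continuous.measurable
      measurable_const)
  have hmeas : ∀ j < K, MeasurableSet (φ j '' B) := fun j hj =>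
    hBm.image_of_continuousOn_injOn (AffineMap.homothety_continuous _ _).continuousOn
      (AffineMap.homothety_injective e (hratio j hj).ne').injOn
  have hscale : ∀ j < K, μH[m] (φ j '' B) = ENNReal.ofReal ((1 - 2 * c * j) ^ m) * μH[m] B :=
    fun j hj => by
      rw [hausdorffMeasure_homothety_image (Nat.cast_nonneg m) e (hratio j hj).ne',
        ENNReal.smul_def, smul_eq_mul, NNReal.rpow_natCast, ENNReal.coe_pow,
        ENNReal.ofReal_pow (hratio j hj).le, ← Real.enorm_of_nonneg (hratio j hj).le,
        enorm_eq_nnnorm]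
  have hsub : ∀ j < K, φ j '' B ⊆ Δ := fun j hj => by
    rintro _ ⟨z, hz, rfl⟩
    rw [AffineMap.homothety_eq_lineMap]
    exact hΔ.lineMap_mem he hz.1 ⟨(hratio j hj).le, sub_le_self _ (by positivity)⟩
  have hdisj : Set.PairwiseDisjoint (Finset.range K : Set ℕ) fun j => φ j '' B := by
    intro j hj j' hj' hne
    simp only [Finset.coe_range, Set.mem_Iio] at hj hj'
    refine Set.disjoint_left.mpr ?_
    rintro _ ⟨z, hz, rfl⟩ ⟨z', hz', hzz'⟩
    have h := N.abs_map_homothety_sub_le e z (hratio j hj).le (sub_le_self _ (by positivity))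
    have h' := N.abs_map_homothety_sub_le e z' (hratio j' hj').le (sub_le_self _ (by positivity))
    rw [hzz', sub_sub_cancel] at h'
    rw [sub_sub_cancel] at h
    have hNe := mul_nonneg hc.le (apply_nonneg N e)
    rw [abs_le] at h h'
    rcases lt_or_gt_of_ne hne with hlt | hlt
    · have : (j : ℝ) + 1 ≤ j' := by exact_mod_cast hlt
      nlinarith [hz.2, hz'.2, mul_le_mul_of_nonneg_left this hNe]
    · have : (j' : ℝ) + 1 ≤ j := by exact_mod_cast hlt
      nlinarith [hz.2, hz'.2, mul_le_mul_of_nonneg_left this hNe]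
  have hsum : (∑ j ∈ Finset.range K, ENNReal.ofReal ((1 - 2 * c * j) ^ m)) * μH[m] B ≤
      μH[m] Δ := by
    rw [Finset.sum_mul, ← Finset.sum_congr rfl fun j hj => hscale j (Finset.mem_range.mp hj),
      ← measure_biUnion_finset hdisj fun j hj => hmeas j (Finset.mem_range.mp hj)]
    exact measure_mono (Set.iUnion₂_subset fun j hj => hsub j (Finset.mem_range.mp hj))
  have hriemann := one_le_mul_sum_one_sub_mul_pow (by positivity : 0 < 2 * c) m
  calc μH[m] B = ENNReal.ofReal 1 * μH[m] B := by simp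
    _ ≤ ENNReal.ofReal ((m + 1) * (2 * c) * ∑ j ∈ Finset.range K, (1 - 2 * c * j) ^ m) *
        μH[m] B := by gcongr
    _ = ENNReal.ofReal (2 * c * (m + 1)) *
        ((∑ j ∈ Finset.range K, ENNReal.ofReal ((1 - 2 * c * j) ^ m)) * μH[m] B) := by
      rw [ENNReal.ofReal_mul (by positivity), ENNReal.ofReal_sum_of_nonneg fun j hj =>
        pow_nonneg (hratio j (Finset.mem_range.mp hj)).le m, mul_comm ((m : ℝ) + 1), mul_assoc]
    _ ≤ _ := by gcongr

end Seminorm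

theorem convex_stdSimplexE (P : ℕ) : Convex ℝ (stdSimplexE P) :=
  (convex_stdSimplex ℝ (Fin P)).linear_preimage (WithLp.linearEquiv 2 ℝ (Fin P → ℝ)).toLinearMap

theorem isClosed_stdSimplexE (P : ℕ) : IsClosed (stdSimplexE P) :=
  (isClosed_stdSimplex ℝ (Fin P)).preimage (PiLp.continuous_ofLp 2 _)

theorem single_mem_stdSimplexE {P : ℕ} (k : Fin P) :
    EuclideanSpace.single k (1 : ℝ) ∈ stdSimplexE P :=
  ⟨fun l => by by_cases h : l = k <;> simp [h], by simp⟩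

theorem ConvexOn.exists_forall_stdSimplexE_le_single {P : ℕ} (hP : 0 < P)
    {f : EuclideanSpace ℝ (Fin P) → ℝ} (hf : ConvexOn ℝ (stdSimplexE P) f) :
    ∃ k, ∀ z ∈ stdSimplexE P, f z ≤ f (EuclideanSpace.single k 1) := by
  have : Nonempty (Fin P) := ⟨⟨0, hP⟩⟩
  obtain ⟨k, -, hk⟩ := Finset.exists_max_image Finset.univ
    (fun l => f (EuclideanSpace.single l 1)) Finset.univ_nonempty
  refine ⟨k, fun z hz => ?_⟩
  have hz_eq : z = ∑ l, z l • EuclideanSpace.single l (1 : ℝ) := by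
    ext l; simp [Pi.single_apply]
  calc f z = f (∑ l, z l • EuclideanSpace.single l (1 : ℝ)) := by rw [← hz_eq]
    _ ≤ ∑ l, z l • f (EuclideanSpace.single l 1) :=
        hf.map_sum_le (fun l _ => hz.1 l) hz.2 fun l _ => single_mem_stdSimplexE l
    _ ≤ ∑ l, z l • f (EuclideanSpace.single k 1) :=
        Finset.sum_le_sum fun l hl => mul_le_mul_of_nonneg_left (hk l hl) (hz.1 l)
    _ = f (EuclideanSpace.single k 1) := by rw [← Finset.sum_smul, hz.2, one_smul]

/-- `Δ_{m+1}` is the graph of `x ↦ 1 - ∑ x` over `cornerSimplex m`: this chart and the projection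
to the first `m` coordinates are Lipschitz, so `μH[m]` on `Δ_{m+1}` is comparable to Lebesgue
measure on `cornerSimplex m`. -/
def simplexChart (m : ℕ) (x : Fin m → ℝ) : EuclideanSpace ℝ (Fin (m + 1)) :=
  WithLp.toLp 2 (Fin.snoc x (1 - ∑ j, x j))

theorem exists_lipschitzWith_simplexChart (m : ℕ) : ∃ K, LipschitzWith K (simplexChart m) := by
  let L : (Fin m → ℝ) →ₗ[ℝ] EuclideanSpace ℝ (Fin (m + 1)) :=
    { toFun := fun x => WithLp.toLp 2 (Fin.snoc x (-∑ j, x j))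
      map_add' := fun x y => by
        ext l
        refine Fin.lastCases ?_ (fun j => ?_) l <;> simp [Finset.sum_add_distrib, add_comm]
      map_smul' := fun a x => by
        ext l
        refine Fin.lastCases ?_ (fun j => ?_) l <;> simp [Finset.mul_sum] }
  have hL : simplexChart m = fun x => L x + simplexChart m 0 := by
    funext x
    ext l
    refine Fin.lastCases ?_ (fun j => ?_) l <;> simp [simplexChart, L, sub_eq_neg_add]
  obtain ⟨K, hK⟩ := L.toAffineMap.lipschitzWith_of_finiteDimensional
  exact ⟨K + 0, hL ▸ hK.add (LipschitzWith.const _)⟩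

def cornerSimplex (m : ℕ) : Set (Fin m → ℝ) := {x | (∀ j, 0 ≤ x j) ∧ ∑ j, x j ≤ 1}

theorem simplexChart_image_cornerSimplex (m : ℕ) :
    simplexChart m '' cornerSimplex m = stdSimplexE (m + 1) := by
  ext z
  constructor
  · rintro ⟨x, ⟨hx₀, hx₁⟩, rfl⟩
    refine ⟨fun l => Fin.lastCases ?_ (fun j => ?_) l, ?_⟩ <;>
      simp [simplexChart, Fin.sum_univ_castSucc, hx₀, hx₁]
  · rintro ⟨hz₀, hz₁⟩
    rw [Fin.sum_univ_castSucc] at hz₁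
    refine ⟨fun j => z (Fin.castSucc j), ⟨fun j => hz₀ _, ?_⟩, ?_⟩
    · linarith [hz₀ (Fin.last m)]
    · ext l
      refine Fin.lastCases ?_ (fun j => ?_) l <;> simp [simplexChart]
      linarith

theorem volume_cornerSimplex_pos (m : ℕ) : 0 < volume (cornerSimplex m) := by
  have hsub : Set.Icc 0 (fun _ => ((m : ℝ) + 1)⁻¹) ⊆ cornerSimplex m := fun x hx => by
    refine ⟨fun j => hx.1 j, ?_⟩
    calc ∑ j, x j ≤ ∑ _j : Fin m, ((m : ℝ) + 1)⁻¹ := Finset.sum_le_sum fun j _ => hx.2 j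
      _ ≤ 1 := by
        rw [Finset.sum_const, Finset.card_univ, Fintype.card_fin, nsmul_eq_mul,
          ← div_eq_mul_inv, div_le_one (by positivity)]
        linarith
  refine lt_of_lt_of_le ?_ (measure_mono hsub)
  simp only [Real.volume_Icc_pi, Pi.zero_apply, sub_zero, Finset.prod_const]
  exact ENNReal.pow_pos (ENNReal.ofReal_pos.mpr (by positivity)) _

theorem volume_cornerSimplex_lt_top (m : ℕ) : volume (cornerSimplex m) < ∞ := by
  have hsub : cornerSimplex m ⊆ Set.Icc 0 1 := fun x hx =>
    ⟨hx.1, fun j => (Finset.single_le_sum (fun l _ => hx.1 l) (Finset.mem_univ j)).trans hx.2⟩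
  exact (measure_mono hsub).trans_lt isCompact_Icc.measure_lt_top

theorem hausdorffMeasure_cornerSimplex (m : ℕ) :
    μH[m] (cornerSimplex m) = volume (cornerSimplex m) := by
  have : (μH[m] : Measure (Fin m → ℝ)) = volume := by
    simpa using hausdorffMeasure_pi_real (ι := Fin m)
  rw [this]

theorem hausdorffMeasure_stdSimplexE_lt_top (m : ℕ) : μH[m] (stdSimplexE (m + 1)) < ∞ := by
  obtain ⟨K, hK⟩ := exists_lipschitzWith_simplexChart m
  rw [← simplexChart_image_cornerSimplex]
  refine (hK.hausdorffMeasure_image_le (Nat.cast_nonneg m) _).trans_lt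
    (ENNReal.mul_lt_top ?_ ?_)
  · exact ENNReal.rpow_lt_top_of_nonneg (Nat.cast_nonneg m) ENNReal.coe_ne_top
  · rw [hausdorffMeasure_cornerSimplex]
    exact volume_cornerSimplex_lt_top m

theorem hausdorffMeasure_stdSimplexE_pos (m : ℕ) : 0 < μH[m] (stdSimplexE (m + 1)) := by
  let π : EuclideanSpace ℝ (Fin (m + 1)) →ₗ[ℝ] (Fin m → ℝ) :=
    (LinearMap.funLeft ℝ ℝ Fin.castSucc).comp (WithLp.linearEquiv 2 ℝ _).toLinearMap
  obtain ⟨K, hK⟩ := π.toAffineMap.lipschitzWith_of_finiteDimensional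
  have himage : π '' stdSimplexE (m + 1) = cornerSimplex m := by
    rw [← simplexChart_image_cornerSimplex, Set.image_image]
    convert Set.image_id (cornerSimplex m) with x
    funext j
    simp [π, simplexChart]
  have hle := hK.hausdorffMeasure_image_le (Nat.cast_nonneg m) (stdSimplexE (m + 1))
  rw [LinearMap.coe_toAffineMap, himage, hausdorffMeasure_cornerSimplex] at hle
  refine pos_iff_ne_zero.mpr fun h0 => (volume_cornerSimplex_pos m).ne' ?_
  simpa [h0] using hle

theorem Seminorm.ofReal_le_simplexUniform {P : ℕ} (hP : 0 < P)
    (N : Seminorm ℝ (EuclideanSpace ℝ (Fin P))) {c : ℝ} (hc : 0 < c) :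
    ENNReal.ofReal (1 - 2 * P * c) ≤
      simplexUniform P {z | c * sSup ((fun w => N w) '' stdSimplexE P) ≤ N z} := by
  obtain ⟨m, rfl⟩ : ∃ m, P = m + 1 := ⟨P - 1, by omega⟩
  obtain ⟨k, hk⟩ := (N.convexOn.subset (Set.subset_univ _)
    (convex_stdSimplexE _)).exists_forall_stdSimplexE_le_single hP
  set e := EuclideanSpace.single k (1 : ℝ)
  set Δ := stdSimplexE (m + 1)
  have hΔm : MeasurableSet Δ := (isClosed_stdSimplexE _).measurableSet
  have hsup : sSup ((fun w => N w) '' Δ) = N e := IsGreatest.csSup_eq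
    ⟨⟨e, single_mem_stdSimplexE k, rfl⟩, by rintro _ ⟨z, hz, rfl⟩; exact hk z hz⟩
  have hcover :
      μH[m] Δ ≤ μH[m] ({z | c * N e ≤ N z} ∩ Δ) + μH[m] {z ∈ Δ | N z < c * N e} := by
    refine (measure_mono fun z hz => ?_).trans (measure_union_le _ _)
    by_cases h : c * N e ≤ N z
    exacts [Or.inl ⟨h, hz⟩, Or.inr ⟨hz, not_le.mp h⟩]
  have hbad := N.hausdorffMeasure_setOf_lt_le (convex_stdSimplexE _) hΔm
    (single_mem_stdSimplexE k) hc m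
  have hdim : ((m + 1 : ℕ) : ℝ) - 1 = m := by push_cast; ring
  have hmass : 2 * ((m + 1 : ℕ) : ℝ) * c = 2 * c * (m + 1) := by push_cast; ring
  rw [simplexUniform, hsup, hdim, hmass, Measure.smul_apply, Measure.restrict_apply' hΔm,
    smul_eq_mul, ← ENNReal.div_eq_inv_mul, ENNReal.le_div_iff_mul_le
      (Or.inl (hausdorffMeasure_stdSimplexE_pos m).ne')
      (Or.inl (hausdorffMeasure_stdSimplexE_lt_top m).ne),
    ENNReal.ofReal_sub _ (by positivity), ENNReal.ofReal_one,
    ENNReal.sub_mul fun _ _ => (hausdorffMeasure_stdSimplexE_lt_top m).ne, one_mul,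
    tsub_le_iff_right]
  exact hcover.trans (add_le_add_right hbad _)

theorem volume_function_anti_concentrated_general
    (d r : ℕ)
    (p : Fin r → ℕ) (hp : ∀ i, 0 < p i)
    (v : ∀ i : Fin r, Fin (p i) → (Fin d → ℝ))
    (i : Fin r) (y : ∀ j : Fin r, EuclideanSpace ℝ (Fin (p j)))
    (c : ℝ) (hc : c ∈ Set.Ioo (0 : ℝ) 1) :
    ENNReal.ofReal (1 - 2 * p i * c) ≤
      simplexUniform (p i)
        {z | c * sSup ((fun w => volFn p v (Function.update y i w)) '' stdSimplexE (p i)) ≤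
          volFn p v (Function.update y i z)} := by
  let W : Matrix (Fin d) (Fin r) ℝ := Matrix.of fun a k => ∑ j, y k j * v k j a
  let T : EuclideanSpace ℝ (Fin (p i)) →ₗ[ℝ] (Fin d → ℝ) :=
    Fintype.linearCombination ℝ (v i) ∘ₗ (WithLp.linearEquiv 2 ℝ (Fin (p i) → ℝ)).toLinearMap
  have hcols : ∀ z, (Matrix.of fun a k => ∑ j, Function.update y i z k j * v k j a) =
      W.updateCol i (T z) := fun z => by
    ext a k
    rcases eq_or_ne k i with rfl | hk
    · simp [T, Fintype.linearCombination_apply, Finset.sum_apply]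
    · simp [W, hk]
  have hvol : ∀ z, volFn p v (Function.update y i z) = (W.gramSeminorm i).comp T z := fun z => by
    rw [Seminorm.comp_apply, Matrix.gramSeminorm_apply, volFn, hcols]
  simp_rw [hvol]
  exact Seminorm.ofReal_le_simplexUniform (hp i) _ hc.1

/-- **2-anti-concentration of the volume function** (Lemma 4.2): for each block coordinate `i`,
any fixed values of the other blocks in their simplices, and any `c ∈ (0,1)`, the uniform
measure of `{z ∈ Δ_{p_i} : f_V(…,z,…) ≥ c · sup_{Δ_{p_i}} f_V(…,w,…)}` is at least
`1 - 2 p_i c`. -/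
theorem volume_function_anti_concentrated
    (d r : ℕ) (hr : 1 ≤ r) (hdr : r ≤ d)
    (p : Fin r → ℕ) (hp : ∀ i, 0 < p i)
    (v : ∀ i : Fin r, Fin (p i) → (Fin d → ℝ))
    (i : Fin r) (y : ∀ j : Fin r, EuclideanSpace ℝ (Fin (p j)))
    (hy : ∀ j, j ≠ i → y j ∈ stdSimplexE (p j))
    (c : ℝ) (hc : c ∈ Set.Ioo (0 : ℝ) 1) :
    ENNReal.ofReal (1 - 2 * p i * c) ≤
      simplexUniform (p i)
        {z | c * sSup ((fun w => volFn p v (Function.update y i w)) '' stdSimplexE (p i)) ≤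
          volFn p v (Function.update y i z)} :=
  volume_function_anti_concentrated_general d r p hp v i y c hc

end
end

section
/- Let r ≥ 2 be an integer and let p ∈ ℝ[x_1, …, x_r] be a multi-linear polynomial (degree at most 1 in each variable). If x is sampled uniformly from the hypercube [0,1]^r, then Pr[ |p(x)| ≥ (2e²)^{-r} · 2^{-r} · max_{z ∈ [0,1]^r} |p(z)| ] ≥ 1/(e² · log r), where log denotes the natural logarithm. -/
/-!
Let `M = |p(v)|` be the maximum of `|p|` on the cube and fix `c > 0`. The clipped logarithmic
gap `Z(x) = log max(M, c) - log max(|p(x)|, c) ≥ 0` has expectation at most `r (1 + log 4)`.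
Indeed, along the first coordinate `p` is affine with endpoint values given by its two faces,
and an affine function on `[0,1]` whose endpoint values have maximal modulus `W` is smaller than
`s W` in modulus only on a set of measure at most `4 s`; by the layer-cake formula this costs at
most `1 + log 4`, and what remains is the same gap for the larger face, handled by induction.
For `c = (4e²)^{-r} M` the event `|p(x)| < c` is the event `Z = r (2 + log 4)`, so Markov's
inequality bounds its probability by `(1 + log 4) / (2 + log 4)`, and the complementary event
has probability at least `1 / (2 + log 4) ≥ 1 / (e² log r)`.
-/

open MeasureTheory Set MvPolynomial
open scoped ENNReal

abbrev unitCube (n : ℕ) : Set (Fin n → ℝ) := univ.pi fun _ => Icc 0 1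

theorem volume_unitCube (n : ℕ) : volume (unitCube n) = 1 := by
  rw [volume_pi_pi]
  simp

theorem lintegral_unitCube_succ {n : ℕ} {f : (Fin (n + 1) → ℝ) → ℝ≥0∞} (hf : Measurable f) :
    ∫⁻ x in unitCube (n + 1), f x = ∫⁻ w in unitCube n, ∫⁻ y in Icc 0 1, f (Fin.cons y w) := by
  let e := MeasurableEquiv.piFinSuccAbove (fun _ : Fin (n + 1) => ℝ) 0
  have he :=
    measurePreserving_piFinSuccAbove (fun _ : Fin (n + 1) => volume.restrict (Icc (0 : ℝ) 1)) 0
  simp only [unitCube, volume_pi, Measure.restrict_pi_pi]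
  rw [← he.symm.lintegral_comp_emb e.symm.measurableEmbedding]
  refine (lintegral_prod_symm (μ := volume.restrict (Icc (0 : ℝ) 1))
    (ν := Measure.pi fun _ : Fin n => volume.restrict (Icc (0 : ℝ) 1)) (f ∘ e.symm)
    (hf.comp e.symm.measurable).aemeasurable).trans ?_
  simp [e, MeasurableEquiv.piFinSuccAbove, Fin.insertNthEquiv, Fin.insertNth_zero']

theorem abs_lineMap_le_max {a b y : ℝ} (hy : y ∈ Icc (0 : ℝ) 1) :
    |(1 - y) * a + y * b| ≤ max |a| |b| := by
  obtain ⟨ha₁, ha₂⟩ := abs_le.1 (le_max_left |a| |b|)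
  obtain ⟨hb₁, hb₂⟩ := abs_le.1 (le_max_right |a| |b|)
  have h1y : 0 ≤ 1 - y := sub_nonneg.2 hy.2
  exact abs_le.2
    ⟨by nlinarith [mul_le_mul_of_nonneg_left ha₁ h1y, mul_le_mul_of_nonneg_left hb₁ hy.1],
      by nlinarith [mul_le_mul_of_nonneg_left ha₂ h1y, mul_le_mul_of_nonneg_left hb₂ hy.1]⟩

theorem max_abs_le_abs_lineMap_add {a b y : ℝ} (hy : y ∈ Icc (0 : ℝ) 1) :
    max |a| |b| ≤ |(1 - y) * a + y * b| + |b - a| := by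
  have h₁ : |y * (b - a)| ≤ |b - a| := by
    rw [abs_mul, abs_of_nonneg hy.1]
    exact mul_le_of_le_one_left (abs_nonneg _) hy.2
  have h₂ : |(1 - y) * (b - a)| ≤ |b - a| := by
    rw [abs_mul, abs_of_nonneg (sub_nonneg.2 hy.2)]
    exact mul_le_of_le_one_left (abs_nonneg _) (by linarith [hy.1])
  refine max_le ?_ ?_
  · calc |a| = |((1 - y) * a + y * b) - y * (b - a)| := by ring_nf
      _ ≤ _ := (abs_sub _ _).trans (by linarith)
  · calc |b| = |((1 - y) * a + y * b) + (1 - y) * (b - a)| := by ring_nf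
      _ ≤ _ := (abs_add_le _ _).trans (by linarith)

theorem volume_abs_lineMap_lt_le {a b s : ℝ} (hab : 0 < max |a| |b|) :
    volume {y ∈ Icc (0 : ℝ) 1 | |(1 - y) * a + y * b| < s} ≤
      ENNReal.ofReal (4 * s / max |a| |b|) := by
  set W := max |a| |b|
  by_cases hba : |b - a| ≤ W / 2
  · by_cases hs : s ≤ W / 2
    · have hempty : {y ∈ Icc (0 : ℝ) 1 | |(1 - y) * a + y * b| < s} = ∅ :=
        eq_empty_of_forall_notMem fun y ⟨hy, hlt⟩ => by
          linarith [max_abs_le_abs_lineMap_add (a := a) (b := b) hy]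
      rw [hempty, measure_empty]
      exact zero_le
    · calc volume {y ∈ Icc (0 : ℝ) 1 | |(1 - y) * a + y * b| < s}
          ≤ volume (Icc (0 : ℝ) 1) := measure_mono (sep_subset _ _)
        _ = ENNReal.ofReal 1 := by rw [Real.volume_Icc, sub_zero]
        _ ≤ ENNReal.ofReal (4 * s / W) := by
          gcongr
          rw [le_div_iff₀ hab]
          linarith
  · have hba₀ : 0 < |b - a| := by linarith
    calc volume {y ∈ Icc (0 : ℝ) 1 | |(1 - y) * a + y * b| < s}
        ≤ volume (Metric.ball (a / (a - b)) (s / |b - a|)) := by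
          refine measure_mono fun y ⟨_, hy⟩ => ?_
          have hne : a - b ≠ 0 := fun h => by simp [sub_eq_zero.1 h] at hba₀
          have heq : (y - a / (a - b)) * (b - a) = (1 - y) * a + y * b := by
            field_simp
            ring
          rwa [Metric.mem_ball, Real.dist_eq, lt_div_iff₀ hba₀, ← abs_mul, heq]
      _ = ENNReal.ofReal (2 * (s / |b - a|)) := Real.volume_ball _ _
      _ ≤ ENNReal.ofReal (4 * s / W) := by
          rcases le_or_gt s 0 with hs | hs
          · rw [ENNReal.ofReal_of_nonpos
              (by nlinarith [div_nonpos_of_nonpos_of_nonneg hs hba₀.le])]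
            exact zero_le
          · gcongr
            rw [mul_div_assoc', div_le_div_iff₀ hba₀ hab]
            nlinarith

theorem lintegral_Ioi_min_one_ofReal_mul_exp_neg_le {C : ℝ} (hC : 1 ≤ C) :
    ∫⁻ t in Ioi 0, min 1 (ENNReal.ofReal (C * Real.exp (-t))) ≤
      ENNReal.ofReal (1 + Real.log C) := by
  have hlogC : 0 ≤ Real.log C := Real.log_nonneg hC
  have hhead : ∫⁻ t in Ioc 0 (Real.log C), min 1 (ENNReal.ofReal (C * Real.exp (-t))) ≤
      ENNReal.ofReal (Real.log C) :=
    calc _ ≤ ∫⁻ _ in Ioc 0 (Real.log C), 1 :=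
          setLIntegral_mono measurable_const fun _ _ => min_le_left _ _
      _ = ENNReal.ofReal (Real.log C) := by rw [setLIntegral_one, Real.volume_Ioc, sub_zero]
  have htail : ∫⁻ t in Ioi (Real.log C), min 1 (ENNReal.ofReal (C * Real.exp (-t))) ≤ 1 :=
    calc _ ≤ ∫⁻ t in Ioi (Real.log C), ENNReal.ofReal (C * Real.exp (-t)) :=
          lintegral_mono fun _ => min_le_right _ _
      _ = ENNReal.ofReal (∫ t in Ioi (Real.log C), C * Real.exp (-t)) :=
          (ofReal_integral_eq_lintegral_ofReal
            (by simpa using (exp_neg_integrableOn_Ioi (Real.log C) zero_lt_one).const_mul C)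
            (ae_of_all _ fun t => by positivity)).symm
      _ = 1 := by
          rw [integral_const_mul, integral_exp_neg_Ioi, Real.exp_neg,
            Real.exp_log (by linarith), mul_inv_cancel₀ (by linarith), ENNReal.ofReal_one]
  rw [← Ioc_union_Ioi_eq_Ioi hlogC, lintegral_union measurableSet_Ioi Ioc_disjoint_Ioi_same,
    ENNReal.ofReal_add zero_le_one hlogC, ENNReal.ofReal_one, add_comm 1]
  exact add_le_add hhead htail

theorem lintegral_ofReal_le_one_add_log_of_meas_lt_le {α : Type*} [MeasurableSpace α]
    {μ : Measure α} (hμ : μ univ ≤ 1) {f : α → ℝ} (hf₀ : 0 ≤ᵐ[μ] f) (hf : AEMeasurable f μ)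
    {C : ℝ} (hC : 1 ≤ C)
    (htail : ∀ t > 0, μ {x | t < f x} ≤ ENNReal.ofReal (C * Real.exp (-t))) :
    ∫⁻ x, ENNReal.ofReal (f x) ∂μ ≤ ENNReal.ofReal (1 + Real.log C) := by
  rw [lintegral_eq_lintegral_meas_lt μ hf₀ hf]
  refine le_trans ?_ (lintegral_Ioi_min_one_ofReal_mul_exp_neg_le hC)
  exact setLIntegral_mono' measurableSet_Ioi fun t ht =>
    le_min ((measure_mono (subset_univ _)).trans hμ) (htail t ht)

-- Clipping at `c > 0` keeps the logarithm away from `log 0` where the polynomial vanishes.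
noncomputable def clippedLog (c t : ℝ) : ℝ := Real.log (max |t| c)

theorem clippedLog_le_clippedLog {c s t : ℝ} (hc : 0 < c) (h : |s| ≤ |t|) :
    clippedLog c s ≤ clippedLog c t :=
  Real.log_le_log (lt_max_of_lt_right hc) (max_le_max_right c h)

@[fun_prop]
theorem measurable_clippedLog (c : ℝ) : Measurable (clippedLog c) :=
  Real.measurable_log.comp (measurable_id.abs.max measurable_const)

theorem lintegral_clippedLog_sub_lineMap_le {a b c : ℝ} (hc : 0 < c) :
    ∫⁻ y in Icc 0 1, ENNReal.ofReal
        (clippedLog c (max |a| |b|) - clippedLog c ((1 - y) * a + y * b)) ≤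
      ENNReal.ofReal (1 + Real.log 4) := by
  set W := max |a| |b|
  refine lintegral_ofReal_le_one_add_log_of_meas_lt_le ?_ ?_ (by fun_prop) (by norm_num) ?_
  · rw [Measure.restrict_apply_univ, Real.volume_Icc, sub_zero, ENNReal.ofReal_one]
  · filter_upwards [ae_restrict_mem measurableSet_Icc] with y hy
    exact sub_nonneg.2
      (clippedLog_le_clippedLog hc ((abs_lineMap_le_max hy).trans (le_abs_self W)))
  intro t ht
  rcases le_or_gt W c with hWc | hcW
  · have hempty : {y | t < clippedLog c W - clippedLog c ((1 - y) * a + y * b)} = ∅ := by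
      refine eq_empty_of_forall_notMem fun y hy => ?_
      have hWabs : |W| = W := abs_of_nonneg ((abs_nonneg a).trans (le_max_left _ _))
      have : clippedLog c W ≤ clippedLog c ((1 - y) * a + y * b) :=
        Real.log_le_log (lt_max_of_lt_right hc)
          (max_le ((hWabs.trans_le hWc).trans (le_max_right _ _)) (le_max_right _ _))
      exact absurd hy (by simp only [mem_ofPred_eq, not_lt]; linarith)
    rw [hempty, measure_empty]
    exact zero_le
  have hW : 0 < W := hc.trans hcW
  rw [Measure.restrict_apply' measurableSet_Icc]
  calc volume ({y | t < clippedLog c W - clippedLog c ((1 - y) * a + y * b)} ∩ Icc 0 1)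
      ≤ volume {y ∈ Icc (0 : ℝ) 1 | |(1 - y) * a + y * b| < W * Real.exp (-t)} := by
        refine measure_mono fun y ⟨hlt, hy⟩ => ⟨hy, ?_⟩
        have hlog : Real.log (max |(1 - y) * a + y * b| c) < Real.log W - t := by
          simp only [mem_ofPred_eq, clippedLog, abs_of_pos hW, max_eq_left hcW.le] at hlt
          linarith
        rw [Real.log_lt_iff_lt_exp (lt_max_of_lt_right hc), Real.exp_sub, Real.exp_log hW,
          div_eq_mul_inv, ← Real.exp_neg] at hlog
        exact (le_max_left _ _).trans_lt hlog
    _ ≤ ENNReal.ofReal (4 * (W * Real.exp (-t)) / W) := volume_abs_lineMap_lt_le hW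
    _ = ENNReal.ofReal (4 * Real.exp (-t)) := by field_simp

theorem lintegral_clippedLog_sub_lineMap_le_add {a b c p q : ℝ} (hc : 0 < c)
    (hq : |q| ≤ max |a| |b|) :
    ∫⁻ y in Icc 0 1, ENNReal.ofReal (clippedLog c p - clippedLog c ((1 - y) * a + y * b)) ≤
      ENNReal.ofReal (clippedLog c p - clippedLog c q) + ENNReal.ofReal (1 + Real.log 4) := by
  have hqW : clippedLog c q ≤ clippedLog c (max |a| |b|) :=
    clippedLog_le_clippedLog hc (hq.trans (le_abs_self _))
  calc ∫⁻ y in Icc 0 1, ENNReal.ofReal (clippedLog c p - clippedLog c ((1 - y) * a + y * b))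
      ≤ ∫⁻ y in Icc 0 1, (ENNReal.ofReal (clippedLog c p - clippedLog c q) + ENNReal.ofReal
          (clippedLog c (max |a| |b|) - clippedLog c ((1 - y) * a + y * b))) :=
        lintegral_mono fun y =>
          (ENNReal.ofReal_le_ofReal (by linarith)).trans ENNReal.ofReal_add_le
    _ = ENNReal.ofReal (clippedLog c p - clippedLog c q) + ∫⁻ y in Icc 0 1, ENNReal.ofReal
          (clippedLog c (max |a| |b|) - clippedLog c ((1 - y) * a + y * b)) := by
        rw [lintegral_add_left measurable_const, setLIntegral_const, Real.volume_Icc, sub_zero,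
          ENNReal.ofReal_one, mul_one]
    _ ≤ _ := by
        gcongr
        exact lintegral_clippedLog_sub_lineMap_le hc

namespace MvPolynomial

theorem eval_cons_eq_add_mul {R : Type*} [CommRing R] {n : ℕ}
    {P : MvPolynomial (Fin (n + 1)) R} (hP : P.degreeOf 0 ≤ 1) (y : R) (w : Fin n → R) :
    eval (Fin.cons y w) P =
      eval w ((finSuccEquiv R n P).coeff 0) + eval w ((finSuccEquiv R n P).coeff 1) * y := by
  have hdeg : ((finSuccEquiv R n P).map (eval w)).natDegree < 2 :=
    Polynomial.natDegree_map_le.trans_lt (by rw [natDegree_finSuccEquiv]; omega)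
  rw [eval_eq_eval_mv_eval', Polynomial.eval_eq_sum_range' hdeg]
  simp [Finset.sum_range_succ, Polynomial.coeff_map]

theorem eval_cons_eq_lineMap {R : Type*} [CommRing R] {n : ℕ}
    {P : MvPolynomial (Fin (n + 1)) R} (hP : P.degreeOf 0 ≤ 1) (y : R) (w : Fin n → R) :
    eval (Fin.cons y w) P = (1 - y) * eval (Fin.cons 0 w) P + y * eval (Fin.cons 1 w) P := by
  rw [eval_cons_eq_add_mul hP, eval_cons_eq_add_mul hP, eval_cons_eq_add_mul hP]
  ring

theorem exists_multiaffine_face {n : ℕ} {P : MvPolynomial (Fin (n + 1)) ℝ}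
    (hP : ∀ i, P.degreeOf i ≤ 1) {v : Fin (n + 1) → ℝ} (hv : v 0 ∈ Icc 0 1) :
    ∃ Q : MvPolynomial (Fin n) ℝ, (∀ i, Q.degreeOf i ≤ 1) ∧
      |eval v P| ≤ |eval (Fin.tail v) Q| ∧
      ∀ w, |eval w Q| ≤ max |eval (Fin.cons 0 w) P| |eval (Fin.cons 1 w) P| := by
  set A := (finSuccEquiv ℝ n P).coeff 0
  set B := (finSuccEquiv ℝ n P).coeff 1
  have hA : ∀ i, A.degreeOf i ≤ 1 := fun i =>
    (degreeOf_coeff_finSuccEquiv P i 0).trans (hP i.succ)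
  have hAB : ∀ i, (A + B).degreeOf i ≤ 1 := fun i => (degreeOf_add_le i A B).trans
    (max_le (hA i) ((degreeOf_coeff_finSuccEquiv P i 1).trans (hP i.succ)))
  have hA₀ : ∀ w, eval w A = eval (Fin.cons 0 w) P := fun w => by
    rw [eval_cons_eq_add_mul (hP 0)]
    ring
  have hAB₁ : ∀ w, eval w (A + B) = eval (Fin.cons 1 w) P := fun w => by
    rw [eval_cons_eq_add_mul (hP 0), map_add]
    ring
  have hvP : |eval v P| ≤ max |eval (Fin.tail v) A| |eval (Fin.tail v) (A + B)| := by
    rw [hA₀, hAB₁, ← Fin.cons_self_tail v, eval_cons_eq_lineMap (hP 0)]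
    exact abs_lineMap_le_max hv
  rcases le_total |eval (Fin.tail v) A| |eval (Fin.tail v) (A + B)| with h | h
  · exact ⟨A + B, hAB, hvP.trans (max_le h le_rfl), fun w => hAB₁ w ▸ le_max_right _ _⟩
  · exact ⟨A, hA, hvP.trans (max_le le_rfl h), fun w => hA₀ w ▸ le_max_left _ _⟩

end MvPolynomial

theorem lintegral_unitCube_clippedLog_sub_le {n : ℕ} {P : MvPolynomial (Fin n) ℝ}
    (hP : ∀ i, P.degreeOf i ≤ 1) {v : Fin n → ℝ} (hv : v ∈ unitCube n) {c : ℝ} (hc : 0 < c) :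
    ∫⁻ x in unitCube n, ENNReal.ofReal (clippedLog c (eval v P) - clippedLog c (eval x P)) ≤
      ENNReal.ofReal (n * (1 + Real.log 4)) := by
  induction n with
  | zero => simp [Subsingleton.elim _ v]
  | succ n ih =>
    obtain ⟨Q, hQ, hvQ, hQP⟩ := exists_multiaffine_face hP (hv 0 (mem_univ _))
    have hPm : Measurable fun x => eval x P := (continuous_eval P).measurable
    rw [lintegral_unitCube_succ (by fun_prop)]
    calc ∫⁻ w in unitCube n, ∫⁻ y in Icc 0 1,
          ENNReal.ofReal (clippedLog c (eval v P) - clippedLog c (eval (Fin.cons y w) P))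
        ≤ ∫⁻ w in unitCube n, (ENNReal.ofReal (clippedLog c (eval (Fin.tail v) Q) -
            clippedLog c (eval w Q)) + ENNReal.ofReal (1 + Real.log 4)) := by
          refine lintegral_mono fun w => ?_
          rw [lintegral_congr fun y => by rw [eval_cons_eq_lineMap (hP 0) y w]]
          refine (lintegral_clippedLog_sub_lineMap_le_add hc (hQP w)).trans ?_
          gcongr
          exact clippedLog_le_clippedLog hc hvQ
      _ = (∫⁻ w in unitCube n, ENNReal.ofReal (clippedLog c (eval (Fin.tail v) Q) -
            clippedLog c (eval w Q))) + ENNReal.ofReal (1 + Real.log 4) := by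
          rw [lintegral_add_right _ measurable_const, setLIntegral_const, volume_unitCube, mul_one]
      _ ≤ ENNReal.ofReal (n * (1 + Real.log 4)) + ENNReal.ofReal (1 + Real.log 4) := by
          gcongr
          exact ih hQ fun i _ => hv i.succ (mem_univ _)
      _ = ENNReal.ofReal ((n + 1 : ℕ) * (1 + Real.log 4)) := by
          rw [← ENNReal.ofReal_add (by positivity) (by positivity)]
          push_cast
          ring_nf

theorem volume_abs_eval_lt_mul_le {n : ℕ} {P : MvPolynomial (Fin n) ℝ}
    (hP : ∀ i, P.degreeOf i ≤ 1) {v : Fin n → ℝ} (hv : v ∈ unitCube n) {ε : ℝ} (hε₀ : 0 < ε)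
    (hε₁ : ε < 1) :
    volume {x ∈ unitCube n | |eval x P| < ε * |eval v P|} ≤
      ENNReal.ofReal (n * (1 + Real.log 4) / Real.log ε⁻¹) := by
  rcases (abs_nonneg (eval v P)).eq_or_lt with hzero | hpos
  · rw [← hzero, mul_zero]
    simp only [(abs_nonneg _).not_gt, and_false, ofPred_false, measure_empty, zero_le]
  set c := ε * |eval v P|
  have hc : 0 < c := mul_pos hε₀ hpos
  have hL : 0 < Real.log ε⁻¹ := Real.log_pos ((one_lt_inv₀ hε₀).2 hε₁)
  have hPm : Measurable fun x => eval x P := (continuous_eval P).measurable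
  have hsub : {x ∈ unitCube n | |eval x P| < c} ⊆ {x | ENNReal.ofReal (Real.log ε⁻¹) ≤
      ENNReal.ofReal (clippedLog c (eval v P) - clippedLog c (eval x P))} ∩ unitCube n := by
    rintro x ⟨hx, hlt⟩
    refine ⟨ENNReal.ofReal_le_ofReal (le_of_eq ?_), hx⟩
    rw [clippedLog, clippedLog, max_eq_right hlt.le,
      max_eq_left (mul_le_of_le_one_left (abs_nonneg _) hε₁.le), Real.log_mul hε₀.ne' hpos.ne',
      Real.log_inv]
    ring
  calc volume {x ∈ unitCube n | |eval x P| < c}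
      ≤ (volume.restrict (unitCube n)) {x | ENNReal.ofReal (Real.log ε⁻¹) ≤
          ENNReal.ofReal (clippedLog c (eval v P) - clippedLog c (eval x P))} := by
        rw [Measure.restrict_apply' (MeasurableSet.univ_pi fun _ => measurableSet_Icc)]
        exact measure_mono hsub
    _ ≤ (∫⁻ x in unitCube n,
          ENNReal.ofReal (clippedLog c (eval v P) - clippedLog c (eval x P))) /
          ENNReal.ofReal (Real.log ε⁻¹) :=
        meas_ge_le_lintegral_div (by fun_prop) (by simpa using hL) ENNReal.ofReal_ne_top
    _ ≤ ENNReal.ofReal (n * (1 + Real.log 4)) / ENNReal.ofReal (Real.log ε⁻¹) := by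
        gcongr
        exact lintegral_unitCube_clippedLog_sub_le hP hv hc
    _ = ENNReal.ofReal (n * (1 + Real.log 4) / Real.log ε⁻¹) :=
        (ENNReal.ofReal_div_of_pos hL).symm

theorem one_div_exp_two_mul_log_le {r : ℕ} (hr : 2 ≤ r) :
    1 / (Real.exp 2 * Real.log r) ≤ 1 / (2 + Real.log 4) := by
  have hlog2 := Real.log_two_gt_d9
  have hexp : 5 ≤ Real.exp 2 := by
    nlinarith [Real.quadratic_le_exp_of_nonneg (zero_le_two (α := ℝ))]
  have hlogr : Real.log 2 ≤ Real.log r := Real.log_le_log two_pos (by exact_mod_cast hr)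
  have hlog4 : Real.log 4 = 2 * Real.log 2 := by
    rw [show (4 : ℝ) = 2 ^ 2 by norm_num, Real.log_pow, Nat.cast_ofNat]
  apply one_div_le_one_div_of_le (by positivity)
  nlinarith

/-- **Anti-concentration of multi-linear polynomials** (Equation (1)): for a multi-linear
polynomial `p` in `r ≥ 2` variables and `x` uniform on `[0,1]^r`,
`|p(x)| ≥ (2e²)^{-r} 2^{-r} max_{[0,1]^r} |p|` with probability at least `1/(e² log r)`. -/
theorem multilinear_anti_concentration
    (r : ℕ) (hr : 2 ≤ r) (P : MvPolynomial (Fin r) ℝ) (hP : ∀ i, P.degreeOf i ≤ 1) :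
    ENNReal.ofReal (1 / (Real.exp 2 * Real.log r)) ≤
      volume {x ∈ Set.univ.pi fun _ : Fin r => Set.Icc (0 : ℝ) 1 |
        (2 * Real.exp 2)⁻¹ ^ r * (2 : ℝ)⁻¹ ^ r *
            sSup ((fun z => |MvPolynomial.eval z P|) ''
              Set.univ.pi fun _ : Fin r => Set.Icc (0 : ℝ) 1) ≤
          |MvPolynomial.eval x P|} := by
  obtain ⟨v, hv, hmax⟩ := (isCompact_univ_pi fun _ => isCompact_Icc).exists_isMaxOn
    (univ_pi_nonempty_iff.2 fun _ => nonempty_Icc.2 zero_le_one)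
    (continuous_eval P).abs.continuousOn
  rw [IsGreatest.csSup_eq
    ⟨mem_image_of_mem _ hv, forall_mem_image.2 fun x hx => isMaxOn_iff.1 hmax x hx⟩]
  set ε : ℝ := (2 * Real.exp 2)⁻¹ ^ r * (2 : ℝ)⁻¹ ^ r
  have hε : ε⁻¹ = (4 * Real.exp 2) ^ r := by
    simp only [ε, ← mul_pow, ← mul_inv, inv_pow, inv_inv]
    ring
  have hε₀ : 0 < ε := by positivity
  have hε₁ : ε < 1 :=
    (one_lt_inv₀ hε₀).1 (hε ▸ one_lt_pow₀ (by linarith [Real.add_one_le_exp 2]) (by omega))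
  have hlogε : Real.log ε⁻¹ = r * (2 + Real.log 4) := by
    rw [hε, Real.log_pow, Real.log_mul four_ne_zero (Real.exp_pos 2).ne', Real.log_exp]
    ring
  have hbad := volume_abs_eval_lt_mul_le hP hv hε₀ hε₁
  rw [hlogε, mul_div_mul_left _ _ (by positivity)] at hbad
  calc ENNReal.ofReal (1 / (Real.exp 2 * Real.log r))
      ≤ ENNReal.ofReal (1 / (2 + Real.log 4)) :=
        ENNReal.ofReal_le_ofReal (one_div_exp_two_mul_log_le hr)
    _ = 1 - ENNReal.ofReal ((1 + Real.log 4) / (2 + Real.log 4)) := by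
        rw [← ENNReal.ofReal_one, ← ENNReal.ofReal_sub _ (by positivity)]
        congr 1
        field_simp
        ring
    _ ≤ volume (unitCube r) - volume {x ∈ unitCube r | |eval x P| < ε * |eval v P|} := by
        rw [volume_unitCube]
        gcongr
    _ ≤ volume (unitCube r \ {x ∈ unitCube r | |eval x P| < ε * |eval v P|}) := le_measure_sdiff
    _ ≤ _ := by
        refine measure_mono ?_
        rintro x ⟨hx, hnot⟩
        exact ⟨hx, not_lt.1 fun h => hnot ⟨hx, h⟩⟩
end

section
/- Let a, b ∈ ℝ and let M = max_{s ∈ [0,1]} |a s + b|. Then for every c ∈ (0,1), the Lebesgue measure of the set { t ∈ [0,1] : |a t + b| < c · M } is at most 2c. -/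
open MeasureTheory

lemma affine_sSup_eq (a b : ℝ) :
    sSup ((fun s => |a * s + b|) '' Set.Icc (0 : ℝ) 1) = max |b| |a + b| := by
  apply le_antisymm
  · apply Real.sSup_le
    · rintro x ⟨s, ⟨hs0, hs1⟩, rfl⟩
      have h : a * s + b = (1 - s) * b + s * (a + b) := by ring
      have h2 : |a * s + b| ≤ (1 - s) * |b| + s * |a + b| := by
        rw [h]
        refine (abs_add_le _ _).trans ?_
        rw [abs_mul, abs_mul, abs_of_nonneg (by linarith), abs_of_nonneg hs0]
      have hb := le_max_left |b| |a + b|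
      have hab := le_max_right |b| |a + b|
      nlinarith
    · positivity
  · apply max_le
    · apply le_csSup
      · exact ⟨max |b| |a + b|, by
          rintro x ⟨s, ⟨hs0, hs1⟩, rfl⟩
          have h : a * s + b = (1 - s) * b + s * (a + b) := by ring
          have h2 : |a * s + b| ≤ (1 - s) * |b| + s * |a + b| := by
            rw [h]
            refine (abs_add_le _ _).trans ?_
            rw [abs_mul, abs_mul, abs_of_nonneg (by linarith), abs_of_nonneg hs0]
          have hb := le_max_left |b| |a + b|
          have hab := le_max_right |b| |a + b|
          nlinarith⟩
      · exact ⟨0, ⟨le_refl _, zero_le_one⟩, by simp⟩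
    · apply le_csSup
      · exact ⟨max |b| |a + b|, by
          rintro x ⟨s, ⟨hs0, hs1⟩, rfl⟩
          have h : a * s + b = (1 - s) * b + s * (a + b) := by ring
          have h2 : |a * s + b| ≤ (1 - s) * |b| + s * |a + b| := by
            rw [h]
            refine (abs_add_le _ _).trans ?_
            rw [abs_mul, abs_mul, abs_of_nonneg (by linarith), abs_of_nonneg hs0]
          have hb := le_max_left |b| |a + b|
          have hab := le_max_right |b| |a + b|
          nlinarith⟩
      · exact ⟨1, ⟨zero_le_one, le_refl _⟩, by simp [mul_one]⟩

lemma affine_key (a b M c : ℝ) (ha : 0 < a) (hb : |b| ≤ M) (hab : |a + b| ≤ M)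
    (hmax : M = |b| ∨ M = |a + b|) (hc0 : 0 < c) (hc1 : c < 1) :
    volume {t ∈ Set.Icc (0 : ℝ) 1 | |a * t + b| < c * M} ≤ ENNReal.ofReal (2 * c) := by
  have hM0 : 0 ≤ M := (abs_nonneg b).trans hb
  rcases le_or_gt M a with hMa | haM
  · -- M ≤ a : the set is contained in an interval of length 2cM/a ≤ 2c
    have hsub : {t ∈ Set.Icc (0 : ℝ) 1 | |a * t + b| < c * M} ⊆
        Set.Ioo ((-(c * M) - b) / a) ((c * M - b) / a) := by
      rintro t ⟨_, ht⟩
      rw [abs_lt] at ht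
      constructor
      · rw [div_lt_iff₀ ha]
        nlinarith [ht.1]
      · rw [lt_div_iff₀ ha]
        nlinarith [ht.2]
    calc volume {t ∈ Set.Icc (0 : ℝ) 1 | |a * t + b| < c * M}
        ≤ volume (Set.Ioo ((-(c * M) - b) / a) ((c * M - b) / a)) := measure_mono hsub
      _ = ENNReal.ofReal ((c * M - b) / a - (-(c * M) - b) / a) := Real.volume_Ioo
      _ ≤ ENNReal.ofReal (2 * c) := by
          apply ENNReal.ofReal_le_ofReal
          rw [div_sub_div_same, div_le_iff₀ ha]
          nlinarith
  · -- a < M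
    rcases hmax with hmax | hmax
    · -- maximum at t = 0
      have hsub : {t ∈ Set.Icc (0 : ℝ) 1 | |a * t + b| < c * M} ⊆ Set.Ioc (1 - c) 1 := by
        rintro t ⟨⟨ht0, ht1⟩, ht⟩
        refine ⟨?_, ht1⟩
        have h1 : |b| - |a * t + b| ≤ |a * t| := by
          have := abs_sub_abs_le_abs_sub b (a * t + b)
          have h2 : b - (a * t + b) = -(a * t) := by ring
          rw [h2, abs_neg] at this
          linarith
        rw [abs_mul, abs_of_pos ha, abs_of_nonneg ht0] at h1
        nlinarith
      calc volume {t ∈ Set.Icc (0 : ℝ) 1 | |a * t + b| < c * M}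
          ≤ volume (Set.Ioc (1 - c) 1) := measure_mono hsub
        _ = ENNReal.ofReal (1 - (1 - c)) := Real.volume_Ioc
        _ ≤ ENNReal.ofReal (2 * c) := by
            apply ENNReal.ofReal_le_ofReal; linarith
    · -- maximum at t = 1
      have hsub : {t ∈ Set.Icc (0 : ℝ) 1 | |a * t + b| < c * M} ⊆ Set.Ico 0 c := by
        rintro t ⟨⟨ht0, ht1⟩, ht⟩
        refine ⟨ht0, ?_⟩
        have h1 : |a + b| - |a * t + b| ≤ |a * (1 - t)| := by
          have := abs_sub_abs_le_abs_sub (a + b) (a * t + b)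
          have h2 : (a + b) - (a * t + b) = a * (1 - t) := by ring
          rw [h2] at this
          linarith
        rw [abs_mul, abs_of_pos ha, abs_of_nonneg (by linarith : (0:ℝ) ≤ 1 - t)] at h1
        nlinarith
      calc volume {t ∈ Set.Icc (0 : ℝ) 1 | |a * t + b| < c * M}
          ≤ volume (Set.Ico 0 c) := measure_mono hsub
        _ = ENNReal.ofReal (c - 0) := Real.volume_Ico
        _ ≤ ENNReal.ofReal (2 * c) := by
            apply ENNReal.ofReal_le_ofReal; linarith

/-- **One-dimensional anti-concentration of affine functions**: with
`M = max_{s ∈ [0,1]} |a s + b|`, for every `c ∈ (0,1)` the Lebesgue measure of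
`{t ∈ [0,1] : |a t + b| < c M}` is at most `2c`. -/
theorem affine_anti_concentrated
    (a b M : ℝ) (hM : M = sSup ((fun s => |a * s + b|) '' Set.Icc (0 : ℝ) 1))
    (c : ℝ) (hc : c ∈ Set.Ioo (0 : ℝ) 1) :
    volume {t ∈ Set.Icc (0 : ℝ) 1 | |a * t + b| < c * M} ≤ ENNReal.ofReal (2 * c) := by
  obtain ⟨hc0, hc1⟩ := hc
  rw [affine_sSup_eq] at hM
  rcases lt_trichotomy a 0 with ha | ha | ha
  · -- a < 0 : reduce to -a, -b
    have hset : {t ∈ Set.Icc (0 : ℝ) 1 | |a * t + b| < c * M} =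
        {t ∈ Set.Icc (0 : ℝ) 1 | |(-a) * t + (-b)| < c * M} := by
      ext t
      have : |(-a) * t + (-b)| = |a * t + b| := by
        rw [show (-a) * t + (-b) = -(a * t + b) by ring, abs_neg]
      simp only [Set.mem_setOf_eq, this]
    rw [hset]
    apply affine_key (-a) (-b) M c (by linarith)
    · rw [abs_neg]; rw [hM]; exact le_max_left _ _
    · rw [show (-a) + (-b) = -(a + b) by ring, abs_neg, hM]; exact le_max_right _ _
    · rcases max_cases |b| |a + b| with ⟨h, _⟩ | ⟨h, _⟩
      · left; rw [abs_neg, hM, h]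
      · right; rw [show (-a) + (-b) = -(a + b) by ring, abs_neg, hM, h]
    · exact hc0
    · exact hc1
  · -- a = 0
    subst ha
    have hMb : M = |b| := by simpa using hM
    have hempty : {t ∈ Set.Icc (0 : ℝ) 1 | |0 * t + b| < c * M} = ∅ := by
      ext t
      simp only [Set.mem_setOf_eq, Set.mem_empty_iff_false, iff_false, not_and]
      intro _
      rw [zero_mul, zero_add, hMb]
      nlinarith [abs_nonneg b]
    rw [hempty]
    simp
  · apply affine_key a b M c ha
    · rw [hM]; exact le_max_left _ _
    · rw [hM]; exact le_max_right _ _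
    · rcases max_cases |b| |a + b| with ⟨h, _⟩ | ⟨h, _⟩
      · left; rw [hM, h]
      · right; rw [hM, h]
    · exact hc0
    · exact hc1
end

section
/- Let d ≤ m be positive integers, let V, B ∈ ℝ^{d×m} be matrices with columns V_1, …, V_m and B_1, …, B_m, and for S ⊆ [m] define g(S) = det( Σ_{i ∈ S} V_i B_iᵀ ). Then for every S ⊆ [m], Σ_{i ∈ S} g(S \ {i}) = (|S| − d) · g(S). -/
open Matrix Finset

private noncomputable def coefAux {d m : ℕ} (V B : Matrix (Fin d) (Fin m) ℝ)
    (f : Fin d → Fin m) : ℝ :=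
  (∏ a, V a (f a)) * Matrix.det (Matrix.of fun a b : Fin d => B b (f a))

private lemma g_expand {d m : ℕ} (V B : Matrix (Fin d) (Fin m) ℝ) (S : Finset (Fin m)) :
    Matrix.det (∑ i ∈ S, Matrix.of fun a b : Fin d => V a i * B b i)
      = ∑ f ∈ Fintype.piFinset (fun _ : Fin d => S), coefAux V B f := by
  have hM : (∑ i ∈ S, Matrix.of fun a b : Fin d => V a i * B b i)
      = fun a => ∑ i ∈ S, V a i • (fun b => B b i) := by
    ext a b
    simp [Matrix.sum_apply, smul_eq_mul]
  calc Matrix.det (∑ i ∈ S, Matrix.of fun a b : Fin d => V a i * B b i)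
      = (Matrix.detRowAlternating (R := ℝ) (n := Fin d)).toMultilinearMap
          (fun a => ∑ i ∈ S, V a i • (fun b => B b i)) := by rw [← hM]; rfl
    _ = ∑ f ∈ Fintype.piFinset (fun _ : Fin d => S),
          (Matrix.detRowAlternating (R := ℝ) (n := Fin d)).toMultilinearMap
            (fun a => V a (f a) • (fun b => B b (f a))) :=
        MultilinearMap.map_sum_finset _ _ _
    _ = ∑ f ∈ Fintype.piFinset (fun _ : Fin d => S), coefAux V B f := by
        refine Finset.sum_congr rfl fun f _ => ?_
        rw [MultilinearMap.map_smul_univ]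
        simp only [coefAux, smul_eq_mul]
        rfl

/-- **Degree-`d` homogeneity identity** (Cauchy–Binet consequence): for
`g(S) = det(∑_{i ∈ S} V_i B_iᵀ)`, one has `∑_{i ∈ S} g(S \ {i}) = (|S| - d) g(S)`. -/
theorem sum_erase_det_outer
    (d m : ℕ) (hd : 0 < d) (hdm : d ≤ m)
    (V B : Matrix (Fin d) (Fin m) ℝ)
    (g : Finset (Fin m) → ℝ)
    (hg : ∀ S : Finset (Fin m),
      g S = Matrix.det (∑ i ∈ S, Matrix.of fun a b : Fin d => V a i * B b i))
    (S : Finset (Fin m)) :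
    ∑ i ∈ S, g (S.erase i) = ((S.card : ℝ) - d) * g S := by
  classical
  have key : ∀ T : Finset (Fin m),
      g T = ∑ f ∈ Fintype.piFinset (fun _ : Fin d => T), coefAux V B f := by
    intro T; rw [hg T, g_expand]
  have hfilter : ∀ i ∈ S,
      Fintype.piFinset (fun _ : Fin d => S.erase i)
        = (Fintype.piFinset (fun _ : Fin d => S)).filter (fun f => ∀ a, f a ≠ i) := by
    intro i _
    ext f
    simp [Fintype.mem_piFinset, Finset.mem_erase, forall_and]
    tauto
  calc ∑ i ∈ S, g (S.erase i)
      = ∑ i ∈ S, ∑ f ∈ Fintype.piFinset (fun _ : Fin d => S),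
          if ∀ a, f a ≠ i then coefAux V B f else 0 := by
        refine Finset.sum_congr rfl fun i hi => ?_
        rw [key, hfilter i hi, Finset.sum_filter]
    _ = ∑ f ∈ Fintype.piFinset (fun _ : Fin d => S),
          ((S.filter (fun i => ∀ a, f a ≠ i)).card : ℝ) * coefAux V B f := by
        rw [Finset.sum_comm]
        refine Finset.sum_congr rfl fun f _ => ?_
        rw [← Finset.sum_filter, Finset.sum_const, nsmul_eq_mul]
    _ = ∑ f ∈ Fintype.piFinset (fun _ : Fin d => S),
          ((S.card : ℝ) - d) * coefAux V B f := by
        refine Finset.sum_congr rfl fun f hf => ?_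
        by_cases hinj : Function.Injective f
        · have hsub : Finset.image f Finset.univ ⊆ S := by
            intro x hx
            simp only [Finset.mem_image] at hx
            obtain ⟨a, -, rfl⟩ := hx
            exact (Fintype.mem_piFinset.mp hf) a
          have himg : (Finset.image f Finset.univ).card = d := by
            rw [Finset.card_image_of_injective _ hinj, Finset.card_univ, Fintype.card_fin]
          have hfe : S.filter (fun i => ∀ a, f a ≠ i) = S \ Finset.image f Finset.univ := by
            ext x
            simp [Finset.mem_filter, Finset.mem_sdiff, eq_comm]
          have hdle : d ≤ S.card := himg ▸ Finset.card_le_card hsub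
          rw [hfe, Finset.card_sdiff_of_subset hsub, himg, Nat.cast_sub hdle]
        · have : coefAux V B f = 0 := by
            obtain ⟨a, b, hab, hne⟩ := Function.not_injective_iff.mp hinj
            have : Matrix.det (Matrix.of fun a b : Fin d => B b (f a)) = 0 := by
              apply Matrix.det_zero_of_row_eq hne
              ext c; simp [hab]
            simp [coefAux, this]
          simp [this]
    _ = ((S.card : ℝ) - d) * g S := by
        rw [← Finset.mul_sum, key]
end

section
/- Let d ≤ m be positive integers, let V, B ∈ ℝ^{d×m} be matrices with columns V_1, …, V_m and B_1, …, B_m, and for S ⊆ [m] define g(S) = det( Σ_{i ∈ S} V_i B_iᵀ ). Then for every S_0 ⊆ [m] with |S_0| ≥ d there exists a subset S ⊆ S_0 with |S| = d such that |g(S)| ≥ |g(S_0)| / C(|S_0|, d), where C(n, k) denotes the binomial coefficient. -/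
open Matrix

/-- **Rounding to a size-`d` set** (Phase 2 of Theorem 1.4): for
`g(S) = det(∑_{i ∈ S} V_i B_iᵀ)` and any `S₀` with `|S₀| ≥ d`, there is `S ⊆ S0` with `|S| = d`
and `|g(S)| ≥ |g(S₀)| / C(|S₀|, d)`. -/
theorem exists_small_subset_large_det
    (d m : ℕ) (hd : 0 < d) (hdm : d ≤ m)
    (V B : Matrix (Fin d) (Fin m) ℝ)
    (g : Finset (Fin m) → ℝ)
    (hg : ∀ S : Finset (Fin m),
      g S = Matrix.det (∑ i ∈ S, Matrix.of fun a b : Fin d => V a i * B b i))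
    (S0 : Finset (Fin m)) (hS0 : d ≤ S0.card) :
    ∃ S ⊆ S0, S.card = d ∧ |g S0| / (S0.card.choose d) ≤ |g S| := by
  classical
  set f := (Matrix.detRowAlternating : (Fin d → ℝ) [⋀^Fin d]→ₗ[ℝ] ℝ) with hf
  set w : Fin m → (Fin d → ℝ) := fun i b => B b i with hw
  set T : (Fin d → Fin m) → ℝ := fun r => (∏ a, V a (r a)) * f (fun a => w (r a)) with hT
  -- Step 1: expansion of g over functions
  have key : ∀ S : Finset (Fin m),
      g S = ∑ r ∈ Fintype.piFinset (fun _ : Fin d => S), T r := by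
    intro S
    rw [hg]
    have h1 : (∑ i ∈ S, Matrix.of fun a b : Fin d => V a i * B b i).det
        = f (fun a => ∑ i ∈ S, V a i • w i) := by
      have : (∑ i ∈ S, Matrix.of fun a b : Fin d => V a i * B b i)
          = Matrix.of (fun a => ∑ i ∈ S, V a i • w i) := by
        ext a b
        simp [Matrix.sum_apply, hw, smul_eq_mul]
      rw [this]
      rfl
    rw [h1]
    have h2 := f.toMultilinearMap.map_sum_finset
      (fun (a : Fin d) (i : Fin m) => V a i • w i) (fun _ : Fin d => S)
    simp only [AlternatingMap.coe_multilinearMap] at h2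
    rw [h2]
    refine Finset.sum_congr rfl fun r _ => ?_
    have h3 := f.toMultilinearMap.map_smul_univ (fun a => V a (r a)) (fun a => w (r a))
    simpa [smul_eq_mul, hT] using h3
  -- Step 2: non-injective terms vanish
  have Tzero : ∀ r : Fin d → Fin m, ¬Function.Injective r → T r = 0 := by
    intro r hr
    rw [Function.not_injective_iff] at hr
    obtain ⟨a, b, hab, hne⟩ := hr
    have : f (fun a => w (r a)) = 0 :=
      f.map_eq_zero_of_eq _ (by rw [hab]) hne
    simp [hT, this]
  -- Step 3: g S0 = ∑ over d-subsets of S0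
  have hsplit : g S0 = ∑ S ∈ S0.powersetCard d, g S := by
    rw [key]
    have hfilter : ∀ S : Finset (Fin m),
        ∑ r ∈ Fintype.piFinset (fun _ : Fin d => S), T r
          = ∑ r ∈ (Fintype.piFinset (fun _ : Fin d => S)).filter
              (fun r => Function.Injective r), T r := by
      intro S
      rw [Finset.sum_filter_of_ne]
      intro r _ hTr
      by_contra hinj
      exact hTr (Tzero r hinj)
    rw [hfilter]
    have hmaps : ∀ r ∈ (Fintype.piFinset (fun _ : Fin d => S0)).filter
        (fun r => Function.Injective r),
        Finset.image r Finset.univ ∈ S0.powersetCard d := by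
      intro r hr
      rw [Finset.mem_filter, Fintype.mem_piFinset] at hr
      rw [Finset.mem_powersetCard]
      constructor
      · intro x hx
        rw [Finset.mem_image] at hx
        obtain ⟨a, _, rfl⟩ := hx
        exact hr.1 a
      · rw [Finset.card_image_of_injective _ hr.2, Finset.card_univ, Fintype.card_fin]
    rw [← Finset.sum_fiberwise_of_maps_to hmaps T]
    refine Finset.sum_congr rfl fun S hS => ?_
    rw [Finset.mem_powersetCard] at hS
    rw [key S, hfilter S]
    congr 1
    ext r
    simp only [Finset.mem_filter, Fintype.mem_piFinset]
    constructor
    · rintro ⟨⟨h1, h2⟩, h3⟩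
      refine ⟨fun a => ?_, h2⟩
      rw [← h3]
      exact Finset.mem_image_of_mem r (Finset.mem_univ a)
    · rintro ⟨h1, h2⟩
      refine ⟨⟨fun a => hS.1 (h1 a), h2⟩, ?_⟩
      apply Finset.eq_of_subset_of_card_le
      · intro x hx
        rw [Finset.mem_image] at hx
        obtain ⟨a, _, rfl⟩ := hx
        exact h1 a
      · rw [Finset.card_image_of_injective _ h2, Finset.card_univ, Fintype.card_fin, hS.2]
  -- Step 4: averaging
  set C : ℕ := S0.card.choose d with hC
  have hCpos : 0 < C := Nat.choose_pos hS0
  have hPcard : (S0.powersetCard d).card = C := Finset.card_powersetCard d S0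
  have hPne : (S0.powersetCard d).Nonempty := by
    rw [← Finset.card_pos, hPcard]; exact hCpos
  have hsum : ∑ S ∈ S0.powersetCard d, |g S0| / (C : ℝ)
      ≤ ∑ S ∈ S0.powersetCard d, |g S| := by
    have h1 : ∑ S ∈ S0.powersetCard d, |g S0| / (C : ℝ) = |g S0| := by
      rw [Finset.sum_const, hPcard, nsmul_eq_mul]
      field_simp
    rw [h1, hsplit]
    exact Finset.abs_sum_le_sum_abs _ _
  obtain ⟨S, hSmem, hSle⟩ := Finset.exists_le_of_sum_le hPne hsum
  rw [Finset.mem_powersetCard] at hSmem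
  exact ⟨S, hSmem.1, hSmem.2, hSle⟩
end

section
/- Let d ≤ m be positive integers and let V, B ∈ ℝ^{d×m}. Then max over subsets S ⊆ [m] with |S| = d of |det(V_S) · det(B_S)| is at least C(m, d)^{-1} · max_{x ∈ [0,1]^m} |det(V X Bᵀ)|, where X = Diag(x) is the m×m diagonal matrix with X_{ii} = x_i, V_S (resp. B_S) denotes the d×d submatrix of V (resp. B) with columns indexed by S, and C(m, d) denotes the binomial coefficient. -/
open Matrix Finset Equiv Function


local notation "ε " σ:arg => ((Equiv.Perm.sign σ : ℤ) : ℝ)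

-- analog of det_mul_aux for rectangular indices
lemma cb_aux1 {d m : ℕ} (M : Matrix (Fin d) (Fin m) ℝ) (N : Matrix (Fin m) (Fin d) ℝ)
    {p : Fin d → Fin m} (H : ¬Function.Injective p) :
    (∑ σ : Equiv.Perm (Fin d), ε σ * ∏ i, M (σ i) (p i) * N (p i) i) = 0 := by
  obtain ⟨i, j, hpij, hij⟩ : ∃ i j, p i = p j ∧ i ≠ j := by
    rw [Function.Injective] at H
    push_neg at H
    obtain ⟨i, j, h1, h2⟩ := H
    exact ⟨i, j, h1, h2⟩
  exact
    Finset.sum_involution (fun σ _ => σ * Equiv.swap i j)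
      (fun σ _ => by
        have : (∏ x, M (σ x) (p x)) = ∏ x, M ((σ * Equiv.swap i j) x) (p x) :=
          Fintype.prod_equiv (Equiv.swap i j) _ _ (by simp [Equiv.apply_swap_eq_self hpij])
        simp [this, Equiv.Perm.sign_swap hij, -Equiv.Perm.sign_swap', Finset.prod_mul_distrib])
      (fun σ _ _ => (not_congr Equiv.mul_swap_eq_iff).mpr hij)
      (fun _ _ => Finset.mem_univ _) fun σ _ => Equiv.mul_swap_involutive i j σ

-- the double permutation sum equals det * det
lemma cb_aux2 {d : ℕ} (M N : Matrix (Fin d) (Fin d) ℝ) :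
    (∑ τ : Equiv.Perm (Fin d), ∑ σ : Equiv.Perm (Fin d),
        ε σ * ∏ i, M (σ i) (τ i) * N (τ i) i) = det M * det N := by
  have h1 : det (M * N) = ∑ p : Fin d → Fin d, ∑ σ : Equiv.Perm (Fin d),
      ε σ * ∏ i, M (σ i) (p i) * N (p i) i := by
    simp only [det_apply', Matrix.mul_apply, Finset.prod_univ_sum, Finset.mul_sum,
      Fintype.piFinset_univ]
    rw [Finset.sum_comm]
  have h2 : (∑ p : Fin d → Fin d, ∑ σ : Equiv.Perm (Fin d),
      ε σ * ∏ i, M (σ i) (p i) * N (p i) i)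
      = ∑ p ∈ Finset.univ.filter Function.Bijective, ∑ σ : Equiv.Perm (Fin d),
        ε σ * ∏ i, M (σ i) (p i) * N (p i) i := by
    refine (Finset.sum_subset (Finset.filter_subset _ _) fun f _ hbij ↦
      Matrix.det_mul_aux ?_).symm
    simpa only [true_and, Finset.mem_filter, Finset.mem_univ] using hbij
  have h3 : (∑ p ∈ Finset.univ.filter Function.Bijective, ∑ σ : Equiv.Perm (Fin d),
        ε σ * ∏ i, M (σ i) (p i) * N (p i) i)
      = ∑ τ : Equiv.Perm (Fin d), ∑ σ : Equiv.Perm (Fin d),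
        ε σ * ∏ i, M (σ i) (τ i) * N (τ i) i :=
    Finset.sum_bij (fun p h ↦ Equiv.ofBijective p (Finset.mem_filter.1 h).2)
      (fun _ _ ↦ Finset.mem_univ _)
      (fun _ _ _ _ h ↦ by injection h)
      (fun b _ ↦ ⟨b, Finset.mem_filter.2 ⟨Finset.mem_univ _, b.bijective⟩,
        Equiv.coe_fn_injective rfl⟩) fun _ _ ↦ rfl
  rw [← Matrix.det_mul, h1, h2, h3]

lemma cb_exists_perm {d m : ℕ} {p : Fin d → Fin m} (hp : Function.Injective p)
    {S : Finset (Fin m)} (hS : S.card = d) (him : Finset.image p Finset.univ = S) :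
    ∃ τ : Equiv.Perm (Fin d), ⇑(S.orderEmbOfFin hS) ∘ ⇑τ = p := by
  set e := S.orderEmbOfFin hS with he
  have hrange : Set.range ⇑e = Set.range p := by
    rw [he, Finset.range_orderEmbOfFin, ← him]
    simp [Finset.coe_image]
  have hmem : ∀ a, p a ∈ Set.range ⇑e := fun a => hrange ▸ Set.mem_range_self a
  have hg : ∀ a, e ((Equiv.ofInjective ⇑e e.injective).symm ⟨p a, hmem a⟩) = p a := fun a =>
    Equiv.apply_ofInjective_symm e.injective ⟨p a, hmem a⟩
  set g : Fin d → Fin d := fun a => (Equiv.ofInjective ⇑e e.injective).symm ⟨p a, hmem a⟩ with hgdef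
  have hginj : Function.Injective g := fun a b hab => hp (by rw [← hg a, ← hg b]; exact congrArg _ hab)
  exact ⟨Equiv.ofBijective g (Finite.injective_iff_bijective.mp hginj), funext hg⟩

/-- weighted Cauchy–Binet -/
theorem cauchyBinet {d m : ℕ} (V : Matrix (Fin d) (Fin m) ℝ) (N : Matrix (Fin m) (Fin d) ℝ) :
    det (V * N) = ∑ S ∈ Finset.univ.powersetCard d,
      if h : S.card = d then
        det (V.submatrix id (S.orderEmbOfFin h)) * det (N.submatrix (S.orderEmbOfFin h) id)
      else 0 := by
  have h1 : det (V * N) = ∑ p : Fin d → Fin m, ∑ σ : Equiv.Perm (Fin d),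
      ε σ * ∏ i, V (σ i) (p i) * N (p i) i := by
    simp only [det_apply', Matrix.mul_apply, Finset.prod_univ_sum, Finset.mul_sum,
      Fintype.piFinset_univ]
    rw [Finset.sum_comm]
  have h2 : (∑ p : Fin d → Fin m, ∑ σ : Equiv.Perm (Fin d),
      ε σ * ∏ i, V (σ i) (p i) * N (p i) i)
      = ∑ p ∈ Finset.univ.filter Function.Injective, ∑ σ : Equiv.Perm (Fin d),
        ε σ * ∏ i, V (σ i) (p i) * N (p i) i := by
    refine (Finset.sum_subset (Finset.filter_subset _ _) fun f _ hbij ↦ cb_aux1 V N ?_).symm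
    simpa only [true_and, Finset.mem_filter, Finset.mem_univ] using hbij
  -- group by image
  have h3 : (∑ p ∈ Finset.univ.filter Function.Injective, ∑ σ : Equiv.Perm (Fin d),
        ε σ * ∏ i, V (σ i) (p i) * N (p i) i)
      = ∑ S ∈ Finset.univ.powersetCard d,
          ∑ p ∈ (Finset.univ.filter Function.Injective).filter
              (fun p : Fin d → Fin m => Finset.image p Finset.univ = S),
            ∑ σ : Equiv.Perm (Fin d), ε σ * ∏ i, V (σ i) (p i) * N (p i) i := by
    refine (Finset.sum_fiberwise_of_maps_to (fun p hp => ?_) _).symm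
    rw [Finset.mem_filter] at hp
    rw [Finset.mem_powersetCard]
    exact ⟨Finset.subset_univ _, by
      rw [Finset.card_image_of_injective _ hp.2, Finset.card_univ, Fintype.card_fin]⟩
  rw [h1, h2, h3]
  refine Finset.sum_congr rfl fun S hSmem => ?_
  have hS : S.card = d := (Finset.mem_powersetCard.mp hSmem).2
  rw [dif_pos hS]
  set e := S.orderEmbOfFin hS with he
  -- inner sum over fiber = sum over permutations
  have h4 : (∑ p ∈ (Finset.univ.filter Function.Injective).filter
        (fun p : Fin d → Fin m => Finset.image p Finset.univ = S),
      ∑ σ : Equiv.Perm (Fin d), ε σ * ∏ i, V (σ i) (p i) * N (p i) i)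
      = ∑ τ : Equiv.Perm (Fin d), ∑ σ : Equiv.Perm (Fin d),
          ε σ * ∏ i, V (σ i) (e (τ i)) * N (e (τ i)) i := by
    refine (Finset.sum_bij (fun (τ : Equiv.Perm (Fin d)) _ => ⇑e ∘ ⇑τ) ?_ ?_ ?_ ?_).symm
    · intro τ _
      simp only [Finset.mem_filter, Finset.mem_univ, true_and]
      constructor
      · exact e.injective.comp τ.injective
      · apply Finset.coe_injective
        rw [Finset.coe_image]
        rw [Set.image_comp, Finset.coe_univ, Set.image_univ, Equiv.range_eq_univ,
          Set.image_univ, he, Finset.range_orderEmbOfFin]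
    · intro τ₁ _ τ₂ _ hcomp
      exact Equiv.ext fun a => e.injective (congrFun hcomp a)
    · intro p hp
      rw [Finset.mem_filter, Finset.mem_filter] at hp
      obtain ⟨⟨_, hpinj⟩, him⟩ := hp
      obtain ⟨τ, hτ⟩ := cb_exists_perm hpinj hS him
      exact ⟨τ, Finset.mem_univ _, hτ⟩
    · intro τ _
      simp only [Function.comp_apply]
  rw [h4]
  have h5 : (∑ τ : Equiv.Perm (Fin d), ∑ σ : Equiv.Perm (Fin d),
      ε σ * ∏ i, V (σ i) (e (τ i)) * N (e (τ i)) i)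
      = ∑ τ : Equiv.Perm (Fin d), ∑ σ : Equiv.Perm (Fin d),
        ε σ * ∏ i, (V.submatrix id ⇑e) (σ i) (τ i) * (N.submatrix ⇑e id) (τ i) i := by
    simp [Matrix.submatrix_apply]
  rw [h5, cb_aux2]

lemma cb_det_diag_submatrix {d m : ℕ} (B : Matrix (Fin d) (Fin m) ℝ) (x : Fin m → ℝ)
    (S : Finset (Fin m)) (hS : S.card = d) :
    det ((Matrix.diagonal x * Bᵀ).submatrix (S.orderEmbOfFin hS) id)
      = (∏ j ∈ S, x j) * det (B.submatrix id (S.orderEmbOfFin hS)) := by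
  set e := S.orderEmbOfFin hS with he
  have hmat : (Matrix.diagonal x * Bᵀ).submatrix ⇑e id
      = Matrix.diagonal (x ∘ ⇑e) * (B.submatrix id ⇑e)ᵀ := by
    ext j i
    simp [Matrix.submatrix_apply, Matrix.diagonal_mul, Matrix.mul_apply, Matrix.diagonal_apply,
      Finset.sum_ite_eq, Matrix.transpose_apply]
  rw [hmat, Matrix.det_mul, Matrix.det_diagonal, Matrix.det_transpose]
  congr 1
  have hSim : S = Finset.image ⇑e Finset.univ := Finset.coe_injective (by
    rw [Finset.coe_image, Finset.coe_univ, Set.image_univ, he, Finset.range_orderEmbOfFin])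
  rw [hSim, Finset.prod_image (fun a _ b _ h => e.injective h)]
  rfl

/-- **Combinatorial optimum versus continuous relaxation** (Theorem 1.4, deterministic core):
the maximum of `|det(V_S) det(B_S)|` over size-`d` subsets `S ⊆ [m]` is at least
`C(m,d)⁻¹` times the maximum of `|det(V X Bᵀ)|` over `x ∈ [0,1]^m`, `X = Diag(x)`. -/
theorem subset_max_ge_relaxation
    (d m : ℕ) (hd : 0 < d) (hdm : d ≤ m)
    (V B : Matrix (Fin d) (Fin m) ℝ) :
    ((m.choose d : ℝ))⁻¹ *
        sSup ((fun x : Fin m → ℝ => |Matrix.det (V * Matrix.diagonal x * Bᵀ)|) ''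
          Set.univ.pi fun _ : Fin m => Set.Icc (0 : ℝ) 1) ≤
      sSup {y : ℝ | ∃ (S : Finset (Fin m)) (hS : S.card = d),
        y = |Matrix.det (V.submatrix id (S.orderEmbOfFin hS)) *
              Matrix.det (B.submatrix id (S.orderEmbOfFin hS))|} := by
  set Φ : Set ℝ := {y : ℝ | ∃ (S : Finset (Fin m)) (hS : S.card = d),
        y = |Matrix.det (V.submatrix id (S.orderEmbOfFin hS)) *
              Matrix.det (B.submatrix id (S.orderEmbOfFin hS))|} with hΦ
  set K := sSup Φ with hK
  -- boundedness
  have hbdd : BddAbove Φ := by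
    have hsub : Φ ⊆ Set.range (fun S : Finset (Fin m) =>
        if h : S.card = d then |Matrix.det (V.submatrix id (S.orderEmbOfFin h)) *
              Matrix.det (B.submatrix id (S.orderEmbOfFin h))| else 0) := by
      rintro y ⟨S, hS, rfl⟩
      exact ⟨S, by simp [hS]⟩
    exact ((Set.finite_range _).subset hsub).bddAbove
  have hkey : ∀ (S : Finset (Fin m)) (hS : S.card = d),
      |Matrix.det (V.submatrix id (S.orderEmbOfFin hS)) *
        Matrix.det (B.submatrix id (S.orderEmbOfFin hS))| ≤ K :=
    fun S hS => le_csSup hbdd ⟨S, hS, rfl⟩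
  have hK0 : 0 ≤ K := by
    obtain ⟨S, _, hScard⟩ := Finset.exists_subset_card_eq
      (show d ≤ (Finset.univ : Finset (Fin m)).card by simpa using hdm)
    exact le_trans (abs_nonneg _) (hkey S hScard)
  have hc : (0:ℝ) < (m.choose d : ℝ) := by exact_mod_cast Nat.choose_pos hdm
  have h6 : sSup ((fun x : Fin m → ℝ => |Matrix.det (V * Matrix.diagonal x * Bᵀ)|) ''
          Set.univ.pi fun _ : Fin m => Set.Icc (0 : ℝ) 1) ≤ (m.choose d : ℝ) * K := by
    apply Real.sSup_le
    · rintro y ⟨x, hx, rfl⟩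
      simp only [Set.mem_pi, Set.mem_univ, forall_true_left, Set.mem_Icc] at hx
      show |Matrix.det (V * Matrix.diagonal x * Bᵀ)| ≤ (m.choose d : ℝ) * K
      rw [Matrix.mul_assoc, cauchyBinet]
      calc |∑ S ∈ Finset.univ.powersetCard d,
            if h : S.card = d then
              det (V.submatrix id (S.orderEmbOfFin h)) *
                det ((Matrix.diagonal x * Bᵀ).submatrix (S.orderEmbOfFin h) id)
            else 0|
          ≤ ∑ S ∈ Finset.univ.powersetCard d,
            |if h : S.card = d then
              det (V.submatrix id (S.orderEmbOfFin h)) *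
                det ((Matrix.diagonal x * Bᵀ).submatrix (S.orderEmbOfFin h) id)
            else 0| := Finset.abs_sum_le_sum_abs _ _
        _ ≤ ∑ _S ∈ Finset.univ.powersetCard d, K := by
            apply Finset.sum_le_sum
            intro S hSmem
            have hS : S.card = d := (Finset.mem_powersetCard.mp hSmem).2
            rw [dif_pos hS, cb_det_diag_submatrix]
            have hxprod : |∏ j ∈ S, x j| ≤ 1 := by
              rw [abs_of_nonneg (Finset.prod_nonneg fun j _ => (hx j).1)]
              exact Finset.prod_le_one (fun j _ => (hx j).1) (fun j _ => (hx j).2)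
            calc |det (V.submatrix id (S.orderEmbOfFin hS)) *
                  ((∏ j ∈ S, x j) * det (B.submatrix id (S.orderEmbOfFin hS)))|
                = |∏ j ∈ S, x j| * |det (V.submatrix id (S.orderEmbOfFin hS)) *
                    det (B.submatrix id (S.orderEmbOfFin hS))| := by
                  rw [← abs_mul]; ring_nf
              _ ≤ 1 * K := mul_le_mul hxprod (hkey S hS) (abs_nonneg _) zero_le_one
              _ = K := one_mul K
        _ = (m.choose d : ℝ) * K := by
            rw [Finset.sum_const, Finset.card_powersetCard, Finset.card_univ, Fintype.card_fin,
              nsmul_eq_mul]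
    · exact mul_nonneg hc.le hK0
  calc ((m.choose d : ℝ))⁻¹ * sSup ((fun x : Fin m → ℝ => |Matrix.det (V * Matrix.diagonal x * Bᵀ)|) ''
          Set.univ.pi fun _ : Fin m => Set.Icc (0 : ℝ) 1)
      ≤ ((m.choose d : ℝ))⁻¹ * ((m.choose d : ℝ) * K) :=
        mul_le_mul_of_nonneg_left h6 (inv_nonneg.mpr hc.le)
    _ = K := by field_simp
end

section
/- Let r ≥ 2 be an integer. Consider the ground set [r] × [r], partitioned into the r blocks {i} × [r] for i ∈ [r], and let S be a uniformly random subset of [r] × [r] of cardinality r. Then the probability that S intersects every block in exactly one element equals r^r / C(r², r), and moreover r^r / C(r², r) ≤ 4e · r · e^{-r}, where C(n, k) denotes the binomial coefficient. -/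
/-!
A set meeting every block `{i} × [r]` in exactly one element is the graph of a function
`[r] → [r]`, so there are exactly `r ^ r` of them. For the bound,
`C(r², r) ≥ (r² - r + 1)^r / r!` and `r! ≤ e √r (r / e)^r` (the Stirling sequence
decreases from `e / √2`) give
`r^r / C(r², r) ≤ e √r e^{-r} (r / (r - 1))^r`, and `(r / (r - 1))^r ≤ 4` for `r ≥ 2`.
-/

open Finset Real
open scoped Nat

section Transversals

variable {α β : Type*} [Fintype α]

def funGraph (f : α → β) : Finset (α × β) :=
  univ.map ⟨fun a => (a, f a), fun _ _ h => congrArg Prod.fst h⟩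

lemma mem_funGraph {f : α → β} {q : α × β} : q ∈ funGraph f ↔ f q.1 = q.2 := by
  simp only [funGraph, mem_map, mem_univ, true_and]
  constructor
  · rintro ⟨a, rfl⟩
    rfl
  · exact fun h => ⟨q.1, Prod.ext rfl h⟩

lemma card_funGraph (f : α → β) : (funGraph f).card = Fintype.card α := by
  simp [funGraph]

lemma funGraph_injective : Function.Injective (funGraph : (α → β) → Finset (α × β)) :=
  fun f g h => funext fun a =>
    (mem_funGraph.1 (h ▸ mem_funGraph.2 rfl : (a, f a) ∈ funGraph g)).symm

lemma filter_fst_eq_funGraph [DecidableEq α] (f : α → β) (a : α) :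
    (funGraph f).filter (fun q => q.1 = a) = {(a, f a)} := by
  ext ⟨a', b⟩
  simp only [mem_filter, mem_funGraph, mem_singleton, Prod.mk.injEq]
  constructor
  · rintro ⟨rfl, rfl⟩; exact ⟨rfl, rfl⟩
  · rintro ⟨rfl, rfl⟩; exact ⟨rfl, rfl⟩

lemma exists_funGraph_eq_iff [DecidableEq α] {S : Finset (α × β)} :
    (∃ f, funGraph f = S) ↔ ∀ a, (S.filter fun q => q.1 = a).card = 1 := by
  constructor
  · rintro ⟨f, rfl⟩ a
    rw [filter_fst_eq_funGraph, card_singleton]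
  · intro h
    choose q hq using fun a => card_eq_one.1 (h a)
    have hq_fst : ∀ a, (q a).1 = a := fun a =>
      (mem_filter.1 (by rw [hq a]; exact mem_singleton_self _ : q a ∈ S.filter _)).2
    refine ⟨fun a => (q a).2, ?_⟩
    ext ⟨a, b⟩
    have hmem : (a, b) ∈ S ↔ (a, b) = q a := by
      rw [← mem_singleton, ← hq a, mem_filter]
      simp
    rw [mem_funGraph, hmem, Prod.ext_iff, hq_fst]
    simp [eq_comm]

theorem card_transversals [DecidableEq α] [Fintype β] [DecidableEq β] :
    (((univ : Finset (α × β)).powersetCard (Fintype.card α)).filter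
        (fun S => ∀ a, (S.filter fun q => q.1 = a).card = 1)).card =
      Fintype.card β ^ Fintype.card α := by
  have himage : ((univ : Finset (α × β)).powersetCard (Fintype.card α)).filter
      (fun S => ∀ a, (S.filter fun q => q.1 = a).card = 1) = univ.image funGraph := by
    ext S
    simp only [mem_filter, mem_powersetCard, mem_image, mem_univ, true_and,
      ← exists_funGraph_eq_iff]
    constructor
    · exact And.right
    · rintro ⟨f, rfl⟩
      exact ⟨⟨subset_univ _, card_funGraph f⟩, f, rfl⟩
  rw [himage, Finset.card_image_of_injective _ funGraph_injective, card_univ,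
    Fintype.card_fun]

end Transversals

lemma factorial_le_exp_one_mul_sqrt_mul {n : ℕ} (hn : n ≠ 0) :
    (n ! : ℝ) ≤ exp 1 * √n * (n / exp 1) ^ n := by
  obtain ⟨m, rfl⟩ := Nat.exists_eq_succ_of_ne_zero hn
  have h := Stirling.stirlingSeq'_antitone (Nat.zero_le m)
  simp only [Function.comp, Stirling.stirlingSeq_one] at h
  rw [Stirling.stirlingSeq, div_le_iff₀ (by positivity), Real.sqrt_mul zero_le_two] at h
  calc ((m.succ) ! : ℝ) ≤ _ := h
    _ = _ := by field_simp

lemma one_add_inv_pow_le_exp_one (m : ℕ) : (1 + (m : ℝ)⁻¹) ^ m ≤ exp 1 := by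
  rcases eq_or_ne m 0 with rfl | hm
  · simp
  calc (1 + (m : ℝ)⁻¹) ^ m ≤ exp (m : ℝ)⁻¹ ^ m := by
        gcongr
        linarith [add_one_le_exp (m : ℝ)⁻¹]
    _ = exp 1 := by rw [← exp_nat_mul, mul_inv_cancel₀ (by exact_mod_cast hm)]

lemma pow_le_four_mul_pred_pow {n : ℕ} (hn : 2 ≤ n) :
    (n : ℝ) ^ n ≤ 4 * ((n : ℝ) - 1) ^ n := by
  obtain ⟨m, rfl⟩ := Nat.exists_eq_add_of_le' (by omega : 1 ≤ n)
  push_cast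
  rw [add_sub_cancel_right]
  have hm1 : 1 ≤ m := by omega
  -- for `m ≥ 3`: `(1 + 1/m)^m ≤ e < 3` and `3 (m + 1) ≤ 4 m`
  rcases Nat.lt_or_ge m 3 with hm | hm
  · interval_cases m <;> norm_num
  have hm0 : (0 : ℝ) < m := by positivity
  have hm3 : (3 : ℝ) ≤ m := by exact_mod_cast hm
  calc ((m : ℝ) + 1) ^ (m + 1) = (1 + (m : ℝ)⁻¹) ^ m * m ^ m * (m + 1) := by
        rw [← mul_pow, add_mul, inv_mul_cancel₀ hm0.ne', one_mul, pow_succ]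
    _ ≤ 3 * m ^ m * (m + 1) := by
        gcongr
        linarith [one_add_inv_pow_le_exp_one m, exp_one_lt_d9]
    _ ≤ 4 * m ^ (m + 1) := by
        rw [pow_succ]
        nlinarith [pow_pos hm0 m]

lemma pow_div_choose_sq_le {r : ℕ} (hr : 2 ≤ r) :
    (r : ℝ) ^ r / (r ^ 2).choose r ≤ r ! / ((r : ℝ) - 1) ^ r := by
  have hx : (1 : ℝ) < r := by exact_mod_cast hr
  have hpos : (0 : ℝ) < ((r : ℝ) * (r - 1)) ^ r / r ! := by
    have : (0 : ℝ) < r - 1 := by linarith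
    positivity
  have hchoose : ((r : ℝ) * (r - 1)) ^ r / r ! ≤ (r ^ 2).choose r := by
    refine le_trans ?_ (Nat.pow_le_choose r (r ^ 2))
    gcongr
    rw [Nat.cast_sub (by nlinarith)]
    push_cast
    nlinarith
  calc (r : ℝ) ^ r / (r ^ 2).choose r ≤ r ^ r / (((r : ℝ) * (r - 1)) ^ r / r !) :=
        div_le_div_of_nonneg_left (by positivity) hpos hchoose
    _ = r ! / ((r : ℝ) - 1) ^ r := by
        rw [mul_pow]
        field_simp

/-- **Hard example for the Nikolov–Singh rounding** (Appendix A): among the uniformly random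
size-`r` subsets of `[r] × [r]`, the proportion of those meeting every block `{i} × [r]` in
exactly one element is `r^r / C(r², r)`, which is at most `4 e r e^{-r}`. -/
theorem transversal_probability
    (r : ℕ) (hr : 2 ≤ r) :
    ((Finset.univ : Finset (Fin r × Fin r)).powersetCard r).card = (r ^ 2).choose r ∧
    (((Finset.univ : Finset (Fin r × Fin r)).powersetCard r).filter
        (fun S => ∀ i : Fin r, (S.filter fun q => q.1 = i).card = 1)).card = r ^ r ∧
    ((r : ℝ) ^ r) / ((r ^ 2).choose r) ≤ 4 * Real.exp 1 * r * Real.exp (-(r : ℝ)) := by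
  refine ⟨by simp [card_powersetCard, sq], ?_, ?_⟩
  · convert card_transversals (α := Fin r) (β := Fin r) using 3 <;> simp
  have hx : (1 : ℝ) < r := by exact_mod_cast hr
  calc (r : ℝ) ^ r / (r ^ 2).choose r ≤ r ! / ((r : ℝ) - 1) ^ r := pow_div_choose_sq_le hr
    _ ≤ exp 1 * √r * (r / exp 1) ^ r / ((r : ℝ) - 1) ^ r := by
        gcongr
        exact factorial_le_exp_one_mul_sqrt_mul (by omega)
    _ = exp 1 * √r * exp (-r) * (r ^ r / ((r : ℝ) - 1) ^ r) := by
        rw [div_pow, exp_one_pow, exp_neg]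
        field_simp
    _ ≤ exp 1 * r * exp (-r) * 4 := by
        gcongr
        · exact sqrt_le_self_iff.2 (Or.inr hx.le)
        · exact div_le_of_le_mul₀ (by positivity) (by norm_num)
            (by linarith [pow_le_four_mul_pred_pow hr])
    _ = 4 * exp 1 * r * exp (-r) := by ring
end

section
/- Let r ≥ 1 be an integer and let x be sampled uniformly from the hypercube [0,1]^r. Then Pr[ ∏_{i=1}^r x_i ≥ (3/4)^r ] ≤ (2/3)^r. -/
/-! Markov's inequality for `x ↦ ∏ i, x i` on the unit cube: by Fubini its mean there is
`(1/2)^r`, and `(1/2)^r / (3/4)^r = (2/3)^r`. -/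

open MeasureTheory

theorem measure_le_ofReal_integral_div {α : Type*} [MeasurableSpace α] {μ : Measure α}
    {f : α → ℝ} (hf_nonneg : 0 ≤ᵐ[μ] f) (hf_int : Integrable f μ) {c : ℝ} (hc : 0 < c) :
    μ {x | c ≤ f x} ≤ ENNReal.ofReal ((∫ x, f x ∂μ) / c) := by
  rw [← integral_div]
  refine (hf_int.div_const c).measure_le_integral ?_
    fun x (hx : c ≤ f x) => (one_le_div₀ hc).2 hx
  filter_upwards [hf_nonneg] with x hx using div_nonneg hx hc.le

theorem volume_restrict_univ_pi {ι E : Type*} [Fintype ι] [MeasureSpace E]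
    [SigmaFinite (volume : Measure E)] (s : Set E) :
    volume.restrict (Set.univ.pi fun _ : ι => s) = Measure.pi fun _ => volume.restrict s := by
  rw [volume_pi, Measure.restrict_pi_pi]

theorem integrable_prod_univ_pi {ι E 𝕜 : Type*} [Fintype ι] [MeasureSpace E]
    [SigmaFinite (volume : Measure E)] [RCLike 𝕜] {f : E → 𝕜} {s : Set E}
    (hf : IntegrableOn f s) :
    IntegrableOn (fun x : ι → E => ∏ i, f (x i)) (Set.univ.pi fun _ => s) := by
  rw [IntegrableOn, volume_restrict_univ_pi]
  exact Integrable.fintype_prod fun _ => hf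

theorem setIntegral_univ_pi_prod_eq_pow {ι E 𝕜 : Type*} [Fintype ι] [MeasureSpace E]
    [SigmaFinite (volume : Measure E)] [RCLike 𝕜] (f : E → 𝕜) (s : Set E) :
    ∫ x in Set.univ.pi (fun _ : ι => s), ∏ i, f (x i) =
      (∫ t in s, f t) ^ Fintype.card ι := by
  rw [volume_restrict_univ_pi, integral_fintype_prod_eq_pow]

theorem setIntegral_Icc_zero_one_id : ∫ t in Set.Icc (0 : ℝ) 1, t = 1 / 2 := by
  rw [integral_Icc_eq_integral_Ioc, ← intervalIntegral.integral_of_le zero_le_one, integral_id]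
  norm_num

theorem product_concentration_general
    (r : ℕ) :
    volume {x ∈ Set.univ.pi fun _ : Fin r => Set.Icc (0 : ℝ) 1 |
        (3 / 4 : ℝ) ^ r ≤ ∏ i, x i} ≤ ENNReal.ofReal ((2 / 3 : ℝ) ^ r) := by
  set cube := Set.univ.pi fun _ : Fin r => Set.Icc (0 : ℝ) 1
  have hcube : MeasurableSet cube := MeasurableSet.univ_pi fun _ => measurableSet_Icc
  have hnonneg : 0 ≤ᵐ[volume.restrict cube] fun x => ∏ i, x i :=
    ae_restrict_of_forall_mem hcube fun x hx => Finset.prod_nonneg fun i _ => (hx i trivial).1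
  have hint : IntegrableOn (fun x : Fin r → ℝ => ∏ i, x i) cube :=
    integrable_prod_univ_pi (f := id) continuous_id.integrableOn_Icc
  have hmean : ∫ x in cube, ∏ i, x i = (1 / 2) ^ r :=
    (setIntegral_univ_pi_prod_eq_pow id _).trans <| by
      rw [Fintype.card_fin]
      exact congrArg (· ^ r) setIntegral_Icc_zero_one_id
  calc volume {x ∈ cube | (3 / 4 : ℝ) ^ r ≤ ∏ i, x i}
      = volume.restrict cube {x | (3 / 4 : ℝ) ^ r ≤ ∏ i, x i} := by
        rw [Measure.restrict_apply' hcube, Set.inter_comm]; rfl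
    _ ≤ ENNReal.ofReal ((∫ x in cube, ∏ i, x i) / (3 / 4) ^ r) :=
        measure_le_ofReal_integral_div hnonneg hint (by positivity)
    _ = ENNReal.ofReal ((2 / 3 : ℝ) ^ r) := by
        rw [hmean, ← div_pow]
        norm_num

/-- **Tightness of the anti-concentration inequality**: for `x` uniform on `[0,1]^r`,
the probability that `∏ x_i ≥ (3/4)^r` is at most `(2/3)^r`. -/
theorem product_concentration
    (r : ℕ) (hr : 1 ≤ r) :
    volume {x ∈ Set.univ.pi fun _ : Fin r => Set.Icc (0 : ℝ) 1 |
        (3 / 4 : ℝ) ^ r ≤ ∏ i, x i} ≤ ENNReal.ofReal ((2 / 3 : ℝ) ^ r) :=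
  product_concentration_general r
end
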